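/- arXiv:2208.08488 — 13 statements merged into one kernel-verified Lean document; each statement's English description precedes it below -/
import Mathlib

section
/- If G is an odd prime graph of order n, then its independence number satisfies β(G) ≥ ⌊(n+1)/3⌋. -/
/-- A simple graph `G` of order `n` is *odd prime* if there is an injective labeling
of its vertices by odd integers from `{1, 3, ..., 2n-1}` such that the labels of
adjacent vertices are relatively prime. -/
def IsOddPrime {V : Type*} [Fintype V] (G : SimpleGraph V) : Prop :=
  ∃ ℓ : V → ℕ, Function.Injective ℓ ∧
    (∀ v, Odd (ℓ v) ∧ ℓ v ≤ 2 * Fintype.card V - 1) ∧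
    ∀ u v, G.Adj u v → Nat.Coprime (ℓ u) (ℓ v)


lemma count_mod_two (N : ℕ) :
    ((Finset.range N).filter (fun m => m % 2 = 1)).card = N / 2 := by
  induction N with
  | zero => simp
  | succ k ih =>
    rw [Finset.range_add_one, Finset.filter_insert]
    by_cases h : k % 2 = 1
    · rw [if_pos h, Finset.card_insert_of_notMem (by simp), ih]; omega
    · rw [if_neg h, ih]; omega

lemma count_mod_six (N : ℕ) :
    ((Finset.range N).filter (fun m => m % 6 = 3)).card = (N + 2) / 6 := by
  induction N with
  | zero => simp
  | succ k ih =>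
    rw [Finset.range_add_one, Finset.filter_insert]
    by_cases h : k % 6 = 3
    · rw [if_pos h, Finset.card_insert_of_notMem (by simp), ih]; omega
    · rw [if_neg h, ih]; omega

/-- If `G` is an odd prime graph of order `n`, then its independence number is at least
`⌊(n+1)/3⌋`, i.e. `G` has an independent set of at least that many vertices. -/
theorem indepNum_ge_of_oddPrime {V : Type*} [Fintype V] (G : SimpleGraph V)
    (hG : IsOddPrime G) :
    ∃ s : Finset V, (∀ u ∈ s, ∀ v ∈ s, ¬ G.Adj u v) ∧
      (Fintype.card V + 1) / 3 ≤ s.card := by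
  classical
  obtain ⟨ℓ, hinj, hbound, hcop⟩ := hG
  set n := Fintype.card V with hn
  rcases Nat.eq_zero_or_pos n with h0 | hpos
  · exact ⟨∅, by simp, by simp [h0]⟩
  -- the image of ℓ is exactly the odd numbers below 2n
  have hsub : Finset.image ℓ Finset.univ ⊆ (Finset.range (2 * n)).filter (fun m => m % 2 = 1) := by
    intro m hm
    simp only [Finset.mem_image, Finset.mem_univ, true_and] at hm
    obtain ⟨v, rfl⟩ := hm
    obtain ⟨hodd, hle⟩ := hbound v
    rw [Nat.odd_iff] at hodd
    simp only [Finset.mem_filter, Finset.mem_range]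
    omega
  have himg : Finset.image ℓ Finset.univ = (Finset.range (2 * n)).filter (fun m => m % 2 = 1) := by
    apply Finset.eq_of_subset_of_card_le hsub
    rw [count_mod_two, Finset.card_image_of_injective _ hinj, Finset.card_univ]
    omega
  refine ⟨Finset.univ.filter (fun v => ℓ v % 6 = 3), ?_, ?_⟩
  · intro u hu v hv hadj
    simp only [Finset.mem_filter] at hu hv
    have h3u : 3 ∣ ℓ u := by omega
    have h3v : 3 ∣ ℓ v := by omega
    have := Nat.eq_one_of_dvd_one ((hcop u v hadj) ▸ Nat.dvd_gcd h3u h3v : (3:ℕ) ∣ 1)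
    · omega
  · have himg2 : Finset.image ℓ (Finset.univ.filter (fun v => ℓ v % 6 = 3)) =
        (Finset.range (2 * n)).filter (fun m => m % 6 = 3) := by
      ext m
      simp only [Finset.mem_image, Finset.mem_filter, Finset.mem_univ, true_and,
        Finset.mem_range]
      constructor
      · rintro ⟨v, hv, rfl⟩
        have : ℓ v ∈ Finset.image ℓ Finset.univ := Finset.mem_image_of_mem _ (Finset.mem_univ v)
        rw [himg] at this
        simp only [Finset.mem_filter, Finset.mem_range] at this
        exact ⟨this.1, hv⟩
      · rintro ⟨hm, hm6⟩
        have : m ∈ Finset.image ℓ Finset.univ := by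
          rw [himg]
          simp only [Finset.mem_filter, Finset.mem_range]
          omega
        simp only [Finset.mem_image, Finset.mem_univ, true_and] at this
        obtain ⟨v, rfl⟩ := this
        exact ⟨v, hm6, rfl⟩
    have hcard : (Finset.univ.filter (fun v => ℓ v % 6 = 3)).card = (2 * n + 2) / 6 := by
      rw [← count_mod_six (2 * n), ← himg2, Finset.card_image_of_injective _ hinj]
    omega
end

section
/- For every n ≥ 1 and every choice of cycle lengths k_1, ..., k_n with each k_i ≥ 3, the disjoint union of cycles C_{k_1} ∪ C_{k_2} ∪ ... ∪ C_{k_n} is odd prime. -/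
/-- The disjoint union of cycles `C_{k 0} ∪ C_{k 1} ∪ ... ∪ C_{k (n-1)}`: the `i`-th
component has vertices `Fin (k i)` joined in a cycle. -/
def unionOfCycles (n : ℕ) (k : Fin n → ℕ) : SimpleGraph (Σ i : Fin n, Fin (k i)) :=
  SimpleGraph.fromRel (fun a b => a.1 = b.1 ∧ b.2.val = (a.2.val + 1) % (k a.1))

/-- Zigzag permutation of `{0, ..., κ-1}`: `0, 1, 3, 5, ..., ..., 6, 4, 2` so that
cyclically adjacent positions get values differing by `1` or `2`. -/
def sigZ (κ i : ℕ) : ℕ := if 2 * i ≤ κ then 2 * i - 1 else 2 * (κ - i)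

lemma sigZ_lt {κ i : ℕ} (hκ : 3 ≤ κ) (hi : i < κ) : sigZ κ i < κ := by
  unfold sigZ; split <;> omega

lemma sigZ_inj {κ i j : ℕ} (hi : i < κ) (hj : j < κ) (h : sigZ κ i = sigZ κ j) : i = j := by
  unfold sigZ at h; split_ifs at h <;> omega

lemma sigZ_adj {κ i : ℕ} (hκ : 3 ≤ κ) (hi : i < κ) :
    sigZ κ i + 1 = sigZ κ ((i + 1) % κ) ∨ sigZ κ ((i + 1) % κ) + 1 = sigZ κ i ∨
    sigZ κ i + 2 = sigZ κ ((i + 1) % κ) ∨ sigZ κ ((i + 1) % κ) + 2 = sigZ κ i := by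
  by_cases h : i + 1 < κ
  · rw [Nat.mod_eq_of_lt h]
    unfold sigZ; split_ifs <;> omega
  · have h' : i + 1 = κ := by omega
    rw [h', Nat.mod_self]
    unfold sigZ; split_ifs <;> omega

lemma cop_of_diff {a b : ℕ} (ha : Odd a) (h : b = a + 2 ∨ b = a + 4) : Nat.Coprime a b := by
  have h2 : Nat.Coprime a 2 := Nat.coprime_two_right.mpr ha
  rcases h with rfl | rfl
  · have : Nat.Coprime a (2 + a) := Nat.coprime_add_self_right.mpr h2
    rwa [add_comm] at this
  · have h4 : Nat.Coprime a 4 := by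
      have := h2.mul_right h2
      norm_num at this
      exact this
    have : Nat.Coprime a (4 + a) := Nat.coprime_add_self_right.mpr h4
    rwa [add_comm] at this

/-- All disjoint unions of cycles are odd prime, for any cycle lengths `k i ≥ 3` and
any number of cycles `n ≥ 1`. -/
theorem unionOfCycles_oddPrime (n : ℕ) (hn : 1 ≤ n) (k : Fin n → ℕ)
    (hk : ∀ i, 3 ≤ k i) : IsOddPrime (unionOfCycles n k) := by
  classical
  set K : ℕ → ℕ := fun m => if h : m < n then k ⟨m, h⟩ else 0 with hK
  set off : ℕ → ℕ := fun m => 2 * ∑ j ∈ Finset.range m, K j with hoff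
  have hKval : ∀ i : Fin n, K i.val = k i := fun i => by simp [hK]
  have hoffmono : ∀ {a b : ℕ}, a ≤ b → off a ≤ off b := by
    intro a b hab
    simp only [hoff]
    exact Nat.mul_le_mul_left 2
      (Finset.sum_le_sum_of_subset (Finset.range_subset_range.mpr hab))
  have hoffsucc : ∀ m, off (m + 1) = off m + 2 * K m := by
    intro m
    simp only [hoff, Finset.sum_range_succ]
    ring
  have hoffdef : ∀ m, off m = 2 * ∑ j ∈ Finset.range m, K j := fun m => rfl
  have hcard : Fintype.card (Σ i : Fin n, Fin (k i)) = ∑ j ∈ Finset.range n, K j := by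
    rw [Fintype.card_sigma]
    simp only [Fintype.card_fin]
    rw [← Fin.sum_univ_eq_sum_range K n]
    exact Finset.sum_congr rfl fun i _ => (hKval i).symm
  refine ⟨fun v => off v.1.val + 2 * sigZ (k v.1) v.2.val + 1, ?_, ?_, ?_⟩
  · -- injectivity
    have hblock : ∀ (i : Fin n) (a : Fin (k i)),
        off i.val ≤ off i.val + 2 * sigZ (k i) a.val + 1 ∧
        off i.val + 2 * sigZ (k i) a.val + 1 < off (i.val + 1) := by
      intro i a
      refine ⟨by omega, ?_⟩
      have h1 := sigZ_lt (hk i) a.isLt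
      have h2 := hoffsucc i.val
      rw [hKval] at h2
      omega
    rintro ⟨i, a⟩ ⟨j, b⟩ h
    simp only at h
    have hij : i = j := by
      by_contra hne
      have hvalne : i.val ≠ j.val := fun hv => hne (Fin.ext hv)
      rcases lt_or_gt_of_ne hvalne with hlt | hlt
      · have h1 := (hblock i a).2
        have h2 := (hblock j b).1
        have h3 : off (i.val + 1) ≤ off j.val := hoffmono hlt
        omega
      · have h1 := (hblock j b).2
        have h2 := (hblock i a).1
        have h3 : off (j.val + 1) ≤ off i.val := hoffmono hlt
        omega
    subst hij
    have hs : sigZ (k i) a.val = sigZ (k i) b.val := by omega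
    exact congrArg (Sigma.mk i) (Fin.ext (sigZ_inj a.isLt b.isLt hs))
  · -- odd and bounded
    rintro ⟨i, a⟩
    constructor
    · show Odd (off i.val + 2 * sigZ (k i) a.val + 1)
      rw [Nat.odd_iff]
      have := hoffdef i.val
      omega
    · show off i.val + 2 * sigZ (k i) a.val + 1 ≤ 2 * Fintype.card (Σ i : Fin n, Fin (k i)) - 1
      rw [hcard]
      have h1 := sigZ_lt (hk i) a.isLt
      have h2 := hoffsucc i.val
      rw [hKval] at h2
      have h3 : off (i.val + 1) ≤ off n := hoffmono i.isLt
      have h4 := hoffdef n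
      omega
  · -- coprimality on edges
    have key : ∀ (i : Fin n) (a b : Fin (k i)), b.val = (a.val + 1) % k i →
        Nat.Coprime (off i.val + 2 * sigZ (k i) a.val + 1)
          (off i.val + 2 * sigZ (k i) b.val + 1) := by
      intro i a b hb
      have hodd : Odd (off i.val + 2 * sigZ (k i) a.val + 1) := by
        rw [Nat.odd_iff]; have := hoffdef i.val; omega
      have hodd' : Odd (off i.val + 2 * sigZ (k i) b.val + 1) := by
        rw [Nat.odd_iff]; have := hoffdef i.val; omega
      have hadj := sigZ_adj (hk i) a.isLt
      rw [← hb] at hadj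
      rcases hadj with h | h | h | h
      · exact cop_of_diff hodd (Or.inl (by omega))
      · exact (cop_of_diff hodd' (Or.inl (by omega))).symm
      · exact cop_of_diff hodd (Or.inr (by omega))
      · exact (cop_of_diff hodd' (Or.inr (by omega))).symm
    rintro ⟨i, a⟩ ⟨j, b⟩ hadj
    rw [unionOfCycles, SimpleGraph.fromRel_adj] at hadj
    obtain ⟨hne, ⟨hij, hb⟩ | ⟨hij, hb⟩⟩ := hadj
    · simp only at hij hb
      subst hij
      exact key _ a b hb
    · simp only at hij hb
      subst hij
      exact (key _ b a hb).symm
end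

section
/- For all k ≥ 3 and n ≥ 2, the snake graph S_{k,n} is odd prime. -/
lemma coprime_consec_odd (t : ℕ) : Nat.Coprime (2*t+1) (2*t+3) := by
  have h : 2*t+3 = (2*t+1) + 2 := by ring
  rw [h, Nat.coprime_self_add_right]
  exact Nat.coprime_two_right.mpr ⟨t, by ring⟩

lemma cop_succ (t x y : ℕ) (hx : x = 2*t+1) (hy : y = 2*t+3) : Nat.Coprime x y := by
  subst hx; subst hy; exact coprime_consec_odd t

lemma coprime_path (c i : ℕ) : Nat.Coprime (2*(c*i)+1) (2*(c*(i+1))+1) := by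
  have h : 2*(c*(i+1))+1 = (2*(c*i)+1) + 2*c := by ring
  rw [h, Nat.coprime_self_add_right, Nat.coprime_comm]
  have h2 : 2*(c*i)+1 = 1 + (2*c) * i := by ring
  rw [h2, Nat.coprime_add_mul_left_right]
  exact Nat.coprime_one_right _

lemma div_mod_uniq (c i j i' j' : ℕ) (hj : j < c) (hj' : j' < c)
    (h : c*i + j = c*i' + j') : i = i' ∧ j = j' := by
  have hc : 0 < c := by omega
  have e1 : (c*i + j) / c = i := by rw [Nat.mul_add_div hc, Nat.div_eq_of_lt hj]; omega
  have e2 : (c*i' + j') / c = i' := by rw [Nat.mul_add_div hc, Nat.div_eq_of_lt hj']; omega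
  have : i = i' := by rw [← e1, ← e2, h]
  subst this
  exact ⟨rfl, by omega⟩

/-- The snake graph `S_{k,n}`: path vertices `v_0, ..., v_{n-1}` (the left summand),
and for each `i = 0, ..., n-2` internal vertices `w_{i,0}, ..., w_{i,k-3}`
(the right summand), with the edges `v_i v_{i+1}`, `v_i w_{i,0}`,
`w_{i,j} w_{i,j+1}` and `w_{i,k-3} v_{i+1}`, so that each block is a `k`-cycle. -/
def snakeGraph (k n : ℕ) : SimpleGraph (Fin n ⊕ (Fin (n - 1) × Fin (k - 2))) :=
  SimpleGraph.fromRel (fun a b =>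
    match a, b with
    | Sum.inl p, Sum.inl q => q.val = p.val + 1
    | Sum.inl p, Sum.inr (q, j) => p.val = q.val ∧ j.val = 0
    | Sum.inr (q, j), Sum.inl p => p.val = q.val + 1 ∧ j.val = k - 3
    | Sum.inr (q, j), Sum.inr (q', j') => q = q' ∧ j'.val = j.val + 1)

/-- Snake graphs `S_{k,n}` are odd prime for any `k ≥ 3` and `n ≥ 2`. -/
theorem snakeGraph_oddPrime (k n : ℕ) (hk : 3 ≤ k) (hn : 2 ≤ n) :
    IsOddPrime (snakeGraph k n) := by
  obtain ⟨b, rfl⟩ : ∃ b, k = b + 3 := ⟨k - 3, by omega⟩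
  obtain ⟨a, rfl⟩ : ∃ a, n = a + 2 := ⟨n - 2, by omega⟩
  refine ⟨Sum.elim (fun i => 2*((b+2)*i.val)+1)
      (fun p => 2*((b+2)*p.1.val + p.2.val + 1)+1), ?_, ?_, ?_⟩
  · -- injectivity
    intro x y h
    rcases x with i | ⟨q, j⟩ <;> rcases y with i' | ⟨q', j'⟩ <;>
      simp only [Sum.elim_inl, Sum.elim_inr] at h
    · have := div_mod_uniq (b+2) i.val 0 i'.val 0 (by omega) (by omega) (by omega)
      exact congrArg Sum.inl (Fin.ext this.1)
    · have hj' : j'.val < b + 1 := j'.isLt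
      have := div_mod_uniq (b+2) i.val 0 q'.val (j'.val+1) (by omega) (by omega) (by omega)
      omega
    · have hj : j.val < b + 1 := j.isLt
      have := div_mod_uniq (b+2) q.val (j.val+1) i'.val 0 (by omega) (by omega) (by omega)
      omega
    · have hj : j.val < b + 1 := j.isLt
      have hj' : j'.val < b + 1 := j'.isLt
      have := div_mod_uniq (b+2) q.val (j.val+1) q'.val (j'.val+1) (by omega) (by omega)
        (by omega)
      simp only [Sum.inr.injEq, Prod.mk.injEq]
      exact ⟨Fin.ext this.1, Fin.ext (by omega)⟩
  · -- odd and bounded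
    have hcard : Fintype.card (Fin (a+2) ⊕ (Fin (a+2-1) × Fin (b+3-2)))
        = (a+2) + (a+1)*(b+1) := by simp
    intro v
    rcases v with i | ⟨q, j⟩ <;> simp only [Sum.elim_inl, Sum.elim_inr] <;> rw [hcard]
    · refine ⟨⟨(b+2)*i.val, by ring⟩, ?_⟩
      have hi : i.val ≤ a + 1 := by have := i.isLt; omega
      have h1 : (b+2)*i.val ≤ (b+2)*(a+1) := Nat.mul_le_mul_left _ hi
      have key : (b+2)*(a+1) + 1 = (a+2) + (a+1)*(b+1) := by ring
      omega
    · refine ⟨⟨(b+2)*q.val + j.val + 1, by ring⟩, ?_⟩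
      have hq : q.val ≤ a := by have := q.isLt; omega
      have hj : j.val ≤ b := by have := j.isLt; omega
      have h1 : (b+2)*q.val ≤ (b+2)*a := Nat.mul_le_mul_left _ hq
      have key : (b+2)*a + b + 3 = (a+2) + (a+1)*(b+1) := by ring
      omega
  · -- coprimality
    intro u v huv
    rcases u with i | ⟨q, j⟩ <;> rcases v with i' | ⟨q', j'⟩ <;>
      rw [snakeGraph, SimpleGraph.fromRel_adj] at huv <;>
      obtain ⟨-, h | h⟩ := huv <;>
      simp only [Sum.elim_inl, Sum.elim_inr]
    · have h' : i'.val = i.val + 1 := h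
      rw [h']
      exact coprime_path (b+2) i.val
    · have h' : i.val = i'.val + 1 := h
      rw [h']
      exact (coprime_path (b+2) i'.val).symm
    · obtain ⟨h1, h2⟩ := (h : i.val = q'.val ∧ j'.val = 0)
      rw [h1]
      exact cop_succ ((b+2)*q'.val) _ _ rfl (by omega)
    · obtain ⟨h1, h2⟩ := (h : i.val = q'.val + 1 ∧ j'.val = b + 3 - 3)
      rw [h1, show (b+2)*(q'.val+1) = (b+2)*q'.val + (b+2) by ring]
      exact (cop_succ ((b+2)*q'.val + j'.val + 1) _ _ rfl (by omega)).symm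
    · obtain ⟨h1, h2⟩ := (h : i'.val = q.val + 1 ∧ j.val = b + 3 - 3)
      rw [h1, show (b+2)*(q.val+1) = (b+2)*q.val + (b+2) by ring]
      exact cop_succ ((b+2)*q.val + j.val + 1) _ _ rfl (by omega)
    · obtain ⟨h1, h2⟩ := (h : i'.val = q.val ∧ j.val = 0)
      rw [h1]
      exact (cop_succ ((b+2)*q.val) _ _ rfl (by omega)).symm
    · obtain ⟨h1, h2⟩ := (h : q = q' ∧ j'.val = j.val + 1)
      rw [h1]
      exact cop_succ ((b+2)*q'.val + j.val + 1) _ _ rfl (by omega)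
    · obtain ⟨h1, h2⟩ := (h : q' = q ∧ j.val = j'.val + 1)
      rw [h1]
      exact (cop_succ ((b+2)*q.val + j'.val + 1) _ _ rfl (by omega)).symm
end

section
/- For all k ≥ 3 and n ≥ 1, the cycle chain 𝒞_k^n is odd prime. -/
/-- The cycle chain `𝒞_k^n`: shared vertices `v_0, ..., v_n`, where each consecutive
pair `v_i, v_{i+1}` is joined by a `w`-path with `k/2 - 1` internal vertices and an
`x`-path with `k - 1 - k/2` internal vertices (for even `k` both paths have length
`k/2`; for odd `k` they have lengths `(k-1)/2` and `(k+1)/2`; when `k = 3` the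
`w`-path is a direct edge `v_i v_{i+1}`), so consecutive shared vertices are joined
by two internally disjoint paths forming a `k`-cycle. -/
def cycleChain (k n : ℕ) :
    SimpleGraph (Fin (n + 1) ⊕ ((Fin n × Fin (k / 2 - 1)) ⊕ (Fin n × Fin (k - 1 - k / 2)))) :=
  SimpleGraph.fromRel (fun a b =>
    match a, b with
    | Sum.inl i, Sum.inl i' => k / 2 - 1 = 0 ∧ i'.val = i.val + 1
    | Sum.inl i, Sum.inr (Sum.inl (q, j)) => i.val = q.val ∧ j.val = 0
    | Sum.inl i, Sum.inr (Sum.inr (q, j)) => i.val = q.val ∧ j.val = 0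
    | Sum.inr (Sum.inl (q, j)), Sum.inl i => i.val = q.val + 1 ∧ j.val = (k / 2 - 1) - 1
    | Sum.inr (Sum.inr (q, j)), Sum.inl i => i.val = q.val + 1 ∧ j.val = (k - 1 - k / 2) - 1
    | Sum.inr (Sum.inl (q, j)), Sum.inr (Sum.inl (q', j')) => q = q' ∧ j'.val = j.val + 1
    | Sum.inr (Sum.inr (q, j)), Sum.inr (Sum.inr (q', j')) => q = q' ∧ j'.val = j.val + 1
    | _, _ => False)

/-- Two odd numbers that differ by `2` or `4` are coprime. -/
lemma cycleChain_coprime_aux {x y : ℕ} (hx : Odd x) (h : y = x + 2 ∨ y = x + 4) :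
    Nat.Coprime x y := by
  have h2 : Nat.Coprime x 2 := Nat.coprime_two_right.mpr hx
  have h4 : Nat.Coprime x 4 := by
    have := Nat.Coprime.mul_right h2 h2
    norm_num at this
    exact this
  rcases h with h | h <;> subst h
  · rw [add_comm]; exact Nat.coprime_add_self_right.mpr h2
  · rw [add_comm]; exact Nat.coprime_add_self_right.mpr h4

/-- Uniqueness of quotient and remainder. -/
lemma cycleChain_quotrem {d q q' r r' : ℕ} (hr : r < d) (hr' : r' < d)
    (h : q * d + r = q' * d + r') : q = q' ∧ r = r' := by
  have hd : 0 < d := by omega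
  have e2 : (q * d + r) / d = q := by
    rw [mul_comm, Nat.mul_add_div hd, Nat.div_eq_of_lt hr, add_zero]
  have e2' : (q' * d + r') / d = q' := by
    rw [mul_comm, Nat.mul_add_div hd, Nat.div_eq_of_lt hr', add_zero]
  have e1 : (q * d + r) % d = r := by
    rw [mul_comm, Nat.mul_add_mod, Nat.mod_eq_of_lt hr]
  have e1' : (q' * d + r') % d = r' := by
    rw [mul_comm, Nat.mul_add_mod, Nat.mod_eq_of_lt hr']
  exact ⟨by rw [← e2, ← e2', h], by rw [← e1, ← e1', h]⟩

/-- The defining relation of the cycle chain, given a name so that we can state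
lemmas about it. -/
def cycleChainRel (k n : ℕ) :
    (Fin (n + 1) ⊕ ((Fin n × Fin (k / 2 - 1)) ⊕ (Fin n × Fin (k - 1 - k / 2)))) →
    (Fin (n + 1) ⊕ ((Fin n × Fin (k / 2 - 1)) ⊕ (Fin n × Fin (k - 1 - k / 2)))) → Prop :=
  fun a b =>
    match a, b with
    | Sum.inl i, Sum.inl i' => k / 2 - 1 = 0 ∧ i'.val = i.val + 1
    | Sum.inl i, Sum.inr (Sum.inl (q, j)) => i.val = q.val ∧ j.val = 0
    | Sum.inl i, Sum.inr (Sum.inr (q, j)) => i.val = q.val ∧ j.val = 0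
    | Sum.inr (Sum.inl (q, j)), Sum.inl i => i.val = q.val + 1 ∧ j.val = (k / 2 - 1) - 1
    | Sum.inr (Sum.inr (q, j)), Sum.inl i => i.val = q.val + 1 ∧ j.val = (k - 1 - k / 2) - 1
    | Sum.inr (Sum.inl (q, j)), Sum.inr (Sum.inl (q', j')) => q = q' ∧ j'.val = j.val + 1
    | Sum.inr (Sum.inr (q, j)), Sum.inr (Sum.inr (q', j')) => q = q' ∧ j'.val = j.val + 1
    | _, _ => False

lemma cycleChain_eq_fromRel (k n : ℕ) :
    cycleChain k n = SimpleGraph.fromRel (cycleChainRel k n) := rfl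

/-- The position of each vertex of the cycle chain in the labeling order:
`v_i` sits at `i*(k-1)`, and within block `i` the `w`-vertices take the even
offsets `2, 4, ...` and the `x`-vertices the odd offsets `1, 3, ...`. -/
def cycleChainPos (k n : ℕ) :
    (Fin (n + 1) ⊕ ((Fin n × Fin (k / 2 - 1)) ⊕ (Fin n × Fin (k - 1 - k / 2)))) → ℕ
  | Sum.inl i => i.val * (k - 1)
  | Sum.inr (Sum.inl (q, j)) => q.val * (k - 1) + 2 * j.val + 2
  | Sum.inr (Sum.inr (q, j)) => q.val * (k - 1) + 2 * j.val + 1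

/-- Along each edge of the cycle chain the labels differ by `2` or `4`, hence
are coprime. -/
lemma cycleChain_key (k n : ℕ) (hk : 3 ≤ k)
    (u v : Fin (n + 1) ⊕ ((Fin n × Fin (k / 2 - 1)) ⊕ (Fin n × Fin (k - 1 - k / 2))))
    (h : cycleChainRel k n u v) :
    Nat.Coprime (2 * cycleChainPos k n u + 1) (2 * cycleChainPos k n v + 1) := by
  rcases u with i | (⟨q, j⟩ | ⟨q, j⟩) <;> rcases v with i' | (⟨q', j'⟩ | ⟨q', j'⟩) <;>
      simp only [cycleChainRel, cycleChainPos] at h ⊢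
  · -- v_i -- v_{i+1}  (k = 3)
    obtain ⟨h1, h2⟩ := h
    have hk3 : k = 3 := by omega
    subst hk3
    exact cycleChain_coprime_aux (odd_two_mul_add_one _) (Or.inr (by omega))
  · -- v_i -- w_{i,0}
    obtain ⟨h1, h2⟩ := h
    rw [h1, h2]
    exact cycleChain_coprime_aux (odd_two_mul_add_one _) (Or.inr (by ring))
  · -- v_i -- x_{i,0}
    obtain ⟨h1, h2⟩ := h
    rw [h1, h2]
    exact cycleChain_coprime_aux (odd_two_mul_add_one _) (Or.inl (by ring))
  · -- w_{i,a-1} -- v_{i+1}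
    obtain ⟨h1, h2⟩ := h
    have hj := j.isLt
    refine cycleChain_coprime_aux (odd_two_mul_add_one _) ?_
    rw [h1, show (q.val + 1) * (k - 1) = q.val * (k - 1) + (k - 1) by ring]
    omega
  · -- w -- w
    obtain ⟨h1, h2⟩ := h
    subst h1
    rw [h2]
    exact cycleChain_coprime_aux (odd_two_mul_add_one _) (Or.inr (by ring))
  · -- x_{i,b-1} -- v_{i+1}
    obtain ⟨h1, h2⟩ := h
    have hj := j.isLt
    refine cycleChain_coprime_aux (odd_two_mul_add_one _) ?_
    rw [h1, show (q.val + 1) * (k - 1) = q.val * (k - 1) + (k - 1) by ring]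
    omega
  · -- x -- x
    obtain ⟨h1, h2⟩ := h
    subst h1
    rw [h2]
    exact cycleChain_coprime_aux (odd_two_mul_add_one _) (Or.inr (by ring))

/-- The position map is injective. -/
lemma cycleChainPos_inj (k n : ℕ) (hk : 3 ≤ k) : Function.Injective (cycleChainPos k n) := by
  intro a b hab
  rcases a with i | (⟨q, j⟩ | ⟨q, j⟩) <;> rcases b with i' | (⟨q', j'⟩ | ⟨q', j'⟩) <;>
      simp only [cycleChainPos] at hab
  · exact congrArg Sum.inl (Fin.val_injective
      (Nat.eq_of_mul_eq_mul_right (by omega) hab))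
  · have hj := j'.isLt
    have h' : i.val * (k - 1) + 0 = q'.val * (k - 1) + (2 * j'.val + 2) := by omega
    have := (cycleChain_quotrem (by omega) (by omega) h').2
    omega
  · have hj := j'.isLt
    have h' : i.val * (k - 1) + 0 = q'.val * (k - 1) + (2 * j'.val + 1) := by omega
    have := (cycleChain_quotrem (by omega) (by omega) h').2
    omega
  · have hj := j.isLt
    have h' : q.val * (k - 1) + (2 * j.val + 2) = i'.val * (k - 1) + 0 := by omega
    have := (cycleChain_quotrem (by omega) (by omega) h').2
    omega
  · have hj := j.isLt
    have hj' := j'.isLt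
    have h' : q.val * (k - 1) + (2 * j.val + 2) = q'.val * (k - 1) + (2 * j'.val + 2) := by
      omega
    obtain ⟨h1, h2⟩ := cycleChain_quotrem (by omega) (by omega) h'
    have hq : q = q' := Fin.val_injective h1
    subst hq
    have hjj : j = j' := Fin.val_injective (by omega)
    subst hjj
    rfl
  · have hj := j.isLt
    have hj' := j'.isLt
    have h' : q.val * (k - 1) + (2 * j.val + 2) = q'.val * (k - 1) + (2 * j'.val + 1) := by
      omega
    have := (cycleChain_quotrem (by omega) (by omega) h').2
    omega
  · have hj := j.isLt
    have h' : q.val * (k - 1) + (2 * j.val + 1) = i'.val * (k - 1) + 0 := by omega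
    have := (cycleChain_quotrem (by omega) (by omega) h').2
    omega
  · have hj := j.isLt
    have hj' := j'.isLt
    have h' : q.val * (k - 1) + (2 * j.val + 1) = q'.val * (k - 1) + (2 * j'.val + 2) := by
      omega
    have := (cycleChain_quotrem (by omega) (by omega) h').2
    omega
  · have hj := j.isLt
    have hj' := j'.isLt
    have h' : q.val * (k - 1) + (2 * j.val + 1) = q'.val * (k - 1) + (2 * j'.val + 1) := by
      omega
    obtain ⟨h1, h2⟩ := cycleChain_quotrem (by omega) (by omega) h'
    have hq : q = q' := Fin.val_injective h1
    subst hq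
    have hjj : j = j' := Fin.val_injective (by omega)
    subst hjj
    rfl

lemma cycleChain_card (k n : ℕ) (hk : 3 ≤ k) :
    Fintype.card (Fin (n + 1) ⊕ ((Fin n × Fin (k / 2 - 1)) ⊕ (Fin n × Fin (k - 1 - k / 2))))
      = n * (k - 1) + 1 := by
  simp only [Fintype.card_sum, Fintype.card_prod, Fintype.card_fin]
  rw [show n * (k / 2 - 1) + n * (k - 1 - k / 2) = n * ((k / 2 - 1) + (k - 1 - k / 2)) by ring,
    show (k / 2 - 1) + (k - 1 - k / 2) = k - 2 by omega,
    show k - 1 = (k - 2) + 1 by omega, Nat.mul_add]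
  ring

lemma cycleChainPos_le (k n : ℕ) (hk : 3 ≤ k)
    (v : Fin (n + 1) ⊕ ((Fin n × Fin (k / 2 - 1)) ⊕ (Fin n × Fin (k - 1 - k / 2)))) :
    cycleChainPos k n v ≤ n * (k - 1) := by
  rcases v with i | (⟨q, j⟩ | ⟨q, j⟩) <;> simp only [cycleChainPos]
  · exact Nat.mul_le_mul_right _ (by omega)
  · have hj := j.isLt
    have h1 : 2 * j.val + 2 ≤ k - 1 := by omega
    calc q.val * (k - 1) + 2 * j.val + 2 ≤ q.val * (k - 1) + (k - 1) := by omega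
      _ = (q.val + 1) * (k - 1) := by ring
      _ ≤ n * (k - 1) := Nat.mul_le_mul_right _ (by omega)
  · have hj := j.isLt
    have h1 : 2 * j.val + 1 ≤ k - 1 := by omega
    calc q.val * (k - 1) + 2 * j.val + 1 ≤ q.val * (k - 1) + (k - 1) := by omega
      _ = (q.val + 1) * (k - 1) := by ring
      _ ≤ n * (k - 1) := Nat.mul_le_mul_right _ (by omega)

/-- Cycle chains `𝒞_k^n` are odd prime for all `k ≥ 3` and `n ≥ 1`. -/
theorem cycleChain_oddPrime (k n : ℕ) (hk : 3 ≤ k) (hn : 1 ≤ n) :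
    IsOddPrime (cycleChain k n) := by
  refine ⟨fun v => 2 * cycleChainPos k n v + 1, ?_, ?_, ?_⟩
  · intro a b hab
    have hab' : 2 * cycleChainPos k n a + 1 = 2 * cycleChainPos k n b + 1 := hab
    exact cycleChainPos_inj k n hk (by omega)
  · intro v
    refine ⟨odd_two_mul_add_one _, ?_⟩
    show 2 * cycleChainPos k n v + 1 ≤ _
    rw [cycleChain_card k n hk]
    have := cycleChainPos_le k n hk v
    omega
  · intro u v huv
    rw [cycleChain_eq_fromRel, SimpleGraph.fromRel_adj] at huv
    rcases huv.2 with h | h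
    · exact cycleChain_key k n hk u v h
    · exact (cycleChain_key k n hk v u h).symm
end

section
/- For all n ≥ 1 and k ≥ 3, the book graph B_{n,k} is odd prime. -/
/-- The label used for the `t`-th internal vertex, skipping the prime `p`. -/
def bookLabel (p t : ℕ) : ℕ := if 2 * t + 3 < p then 2 * t + 3 else 2 * t + 5

lemma bookLabel_odd (p t : ℕ) : Odd (bookLabel p t) := by
  unfold bookLabel; split_ifs <;> rw [Nat.odd_iff] <;> omega

lemma bookLabel_coprime_aux (a b : ℕ) (ha : Odd a) (h : b = a + 2 ∨ b = a + 4) :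
    Nat.Coprime a b := by
  rcases h with rfl | rfl
  · rw [show a + 2 = 2 + a from by ring, Nat.coprime_add_self_right]
    exact ha.coprime_two_right
  · rw [show a + 4 = 2 ^ 2 + a from by ring, Nat.coprime_add_self_right]
    exact Nat.Coprime.pow_right 2 ha.coprime_two_right

lemma bookLabel_succ_coprime (p t : ℕ) :
    Nat.Coprime (bookLabel p t) (bookLabel p (t + 1)) := by
  unfold bookLabel
  split_ifs with h1 h2 h2
  · exact bookLabel_coprime_aux _ _ ⟨t + 1, by ring⟩ (by omega)
  · exact bookLabel_coprime_aux _ _ ⟨t + 1, by ring⟩ (by omega)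
  · omega
  · exact bookLabel_coprime_aux _ _ ⟨t + 2, by ring⟩ (by omega)

lemma bookLabel_inj (p t s : ℕ) (h : bookLabel p t = bookLabel p s) : t = s := by
  unfold bookLabel at h; split_ifs at h <;> omega

lemma bookLabel_ne (p t : ℕ) : bookLabel p t ≠ p := by
  unfold bookLabel; split_ifs <;> omega

lemma bookLabel_ge (p t : ℕ) : 3 ≤ bookLabel p t := by
  unfold bookLabel; split_ifs <;> omega

lemma bookLabel_le (p t : ℕ) : bookLabel p t ≤ 2 * t + 5 := by
  unfold bookLabel; split_ifs <;> omega

lemma bookLabel_coprime_prime (p t : ℕ) (hp : p.Prime) (h2 : bookLabel p t < 2 * p) :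
    Nat.Coprime p (bookLabel p t) := by
  rw [hp.coprime_iff_not_dvd]
  rintro ⟨c, hc⟩
  have h3 := bookLabel_ge p t
  have h4 := bookLabel_ne p t
  have hc2 : c = 0 ∨ c = 1 ∨ 2 ≤ c := by omega
  rcases hc2 with rfl | rfl | hc2
  · omega
  · omega
  · have : 2 * p ≤ p * c := by nlinarith [hp.two_le]
    omega




/-- The book graph `B_{n,k}`: `n` cycles of length `k` (the pages) all sharing the
common edge `uv`, where `u = Sum.inl 0`, `v = Sum.inl 1`, and the `i`-th page has
internal vertices `w_{i,0}, ..., w_{i,k-3}` with edges `u w_{i,0}`,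
`w_{i,j} w_{i,j+1}` and `w_{i,k-3} v`. -/
def bookGraph (n k : ℕ) : SimpleGraph (Fin 2 ⊕ (Fin n × Fin (k - 2))) :=
  SimpleGraph.fromRel (fun a b =>
    match a, b with
    | Sum.inl a, Sum.inl b => a = 0 ∧ b = 1
    | Sum.inl a, Sum.inr (_, j) => (a = 0 ∧ j.val = 0) ∨ (a = 1 ∧ j.val = k - 3)
    | Sum.inr (i, j), Sum.inr (i', j') => i = i' ∧ j'.val = j.val + 1
    | Sum.inr _, Sum.inl _ => False)

/-- Book graphs `B_{n,k}` are odd prime for any `n ≥ 1` and `k ≥ 3`. -/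
theorem bookGraph_oddPrime (n k : ℕ) (hn : 1 ≤ n) (hk : 3 ≤ k) :
    IsOddPrime (bookGraph n k) := by
  obtain ⟨p, hp, hplb, hpub⟩ := Nat.exists_prime_lt_and_le_two_mul (n * (k - 2) + 1) (by positivity)
  have hm1 : 1 ≤ k - 2 := by omega
  have hnm : 1 ≤ n * (k - 2) := Nat.one_le_iff_ne_zero.mpr (by positivity)
  have hp3 : 3 ≤ p := by omega
  have hcard : Fintype.card (Fin 2 ⊕ (Fin n × Fin (k - 2))) = 2 + n * (k - 2) := by
    simp [mul_comm]
  -- the index of an internal vertex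
  have htlt : ∀ (i : Fin n) (j : Fin (k - 2)), (k - 2) * i.val + j.val < n * (k - 2) := by
    rintro ⟨i, hi⟩ ⟨j, hj⟩
    simp only
    calc (k - 2) * i + j < (k - 2) * i + (k - 2) := by omega
    _ = (k - 2) * (i + 1) := by ring
    _ ≤ (k - 2) * n := Nat.mul_le_mul_left _ (by omega)
    _ = n * (k - 2) := mul_comm _ _
  have htinj : ∀ (i i' : Fin n) (j j' : Fin (k - 2)),
      (k - 2) * i.val + j.val = (k - 2) * i'.val + j'.val → i = i' ∧ j = j' := by
    intro i i' j j' h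
    have hq : ((k - 2) * i.val + j.val) / (k - 2) = ((k - 2) * i'.val + j'.val) / (k - 2) := by
      rw [h]
    rw [Nat.mul_add_div (by omega), Nat.mul_add_div (by omega),
      Nat.div_eq_of_lt j.isLt, Nat.div_eq_of_lt j'.isLt] at hq
    have hi : i.val = i'.val := by omega
    rw [hi] at h
    exact ⟨Fin.ext hi, Fin.ext (by omega)⟩
  have hble : ∀ t, t < n * (k - 2) → bookLabel p t ≤ 2 * (n * (k - 2)) + 3 := by
    intro t ht
    have := bookLabel_le p t
    omega
  have hpcop : ∀ t, t < n * (k - 2) → Nat.Coprime p (bookLabel p t) := by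
    intro t ht
    exact bookLabel_coprime_prime p t hp (by have := hble t ht; omega)
  refine ⟨fun a => Sum.elim (fun x => if x = 0 then 1 else p)
      (fun ij => bookLabel p ((k - 2) * ij.1.val + ij.2.val)) a, ?_, ?_, ?_⟩
  · rintro (x | ⟨i, j⟩) (y | ⟨i', j'⟩) h <;> simp only [Sum.elim_inl, Sum.elim_inr] at h
    · fin_cases x <;> fin_cases y <;> simp_all
    · split_ifs at h with hx
      · have := bookLabel_ge p ((k - 2) * i'.val + j'.val); omega
      · exact absurd h.symm (bookLabel_ne p _)
    · split_ifs at h with hx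
      · have := bookLabel_ge p ((k - 2) * i.val + j.val); omega
      · exact absurd h (bookLabel_ne p _)
    · obtain ⟨h1, h2⟩ := htinj i i' j j' (bookLabel_inj p _ _ h)
      rw [h1, h2]
  · rintro (x | ⟨i, j⟩) <;> simp only [Sum.elim_inl, Sum.elim_inr, hcard]
    · split_ifs
      · exact ⟨odd_one, by omega⟩
      · exact ⟨hp.odd_of_ne_two (by omega), by omega⟩
    · exact ⟨bookLabel_odd p _, by have := hble _ (htlt i j); omega⟩
  · rintro (x | ⟨i, j⟩) (y | ⟨i', j'⟩) hadj <;>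
      rw [bookGraph, SimpleGraph.fromRel_adj] at hadj <;>
      simp only [Sum.elim_inl, Sum.elim_inr]
    · rcases hadj.2 with ⟨hx, hy⟩ | ⟨hy, hx⟩ <;> subst hx <;> subst hy <;> simp
    · rcases hadj.2 with (⟨hx, hj⟩ | ⟨hx, hj⟩) | h
      · subst hx; simp
      · subst hx
        simp only [Fin.isValue, if_neg (by decide : (1 : Fin 2) ≠ 0)]
        exact hpcop _ (htlt i' j')
      · exact h.elim
    · rcases hadj.2 with h | (⟨hx, hj⟩ | ⟨hx, hj⟩)
      · exact h.elim
      · subst hx; simp [Nat.coprime_one_right]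
      · subst hx
        simp only [Fin.isValue, if_neg (by decide : (1 : Fin 2) ≠ 0)]
        exact ((hpcop _ (htlt i j))).symm
    · rcases hadj.2 with ⟨hi, hj⟩ | ⟨hi, hj⟩
      · rw [hi]
        have : (k - 2) * i'.val + j'.val = ((k - 2) * i'.val + j.val) + 1 := by omega
        rw [this]
        exact bookLabel_succ_coprime p _
      · rw [hi]
        have : (k - 2) * i.val + j.val = ((k - 2) * i.val + j'.val) + 1 := by omega
        rw [this]
        exact (bookLabel_succ_coprime p _).symm
end

section
/- For all n ≥ 3, the prism graph GP(n,1) is odd prime. -/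
/-- The prism graph `GP(n,1)`: two cycles on `n` vertices (inner cycle `(0, i)` and
outer cycle `(1, i)` for `i : Fin n`) joined by the spokes `(0, i)(1, i)`. -/
def prismGraph (n : ℕ) : SimpleGraph (Fin 2 × Fin n) :=
  SimpleGraph.fromRel (fun a b =>
    (a.1 = b.1 ∧ b.2.val = (a.2.val + 1) % n) ∨ (a.1 ≠ b.1 ∧ a.2 = b.2))

lemma cop24 (a k : ℕ) (ha : Odd a) (hk : k = 2 ∨ k = 4) : Nat.Coprime a (a + k) := by
  rw [add_comm, Nat.coprime_add_self_right]
  have h2 : Nat.Coprime a 2 := Nat.coprime_two_right.mpr ha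
  rcases hk with rfl | rfl
  · exact h2
  · have h4 : (4:ℕ) = 2 * 2 := rfl
    rw [h4]; exact h2.mul_right h2

lemma cop3 (m : ℕ) (h : m % 3 ≠ 0) : Nat.Coprime 3 m := by
  refine (Nat.prime_three.coprime_iff_not_dvd).mpr ?_
  omega

lemma cop_conv {x y a b : ℕ} (h : Nat.Coprime a b) (hx : x = a) (hy : y = b) :
    Nat.Coprime x y := hx ▸ hy ▸ h

/-- The labeling of the prism graph: vertex `(p, i)` gets `4*i + 1` if `p = 0`
and `4*i + 3` if `p = 1`, except when `n % 3 = 1`, in which case the two labels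
at the vertices with `i = 0` are swapped. -/
def plab (n : ℕ) (a : Fin 2 × Fin n) : ℕ :=
  4 * a.2.val + (if n % 3 = 1 ∧ a.2.val = 0 then 3 - 2 * a.1.val else 2 * a.1.val + 1)

lemma plab_cop (n : ℕ) (hn : 3 ≤ n) (u v : Fin 2 × Fin n)
    (h : (u.1 = v.1 ∧ v.2.val = (u.2.val + 1) % n) ∨ (u.1 ≠ v.1 ∧ u.2 = v.2)) :
    Nat.Coprime (plab n u) (plab n v) := by
  have hp : u.1.val < 2 := u.1.isLt
  have hq : v.1.val < 2 := v.1.isLt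
  have hi : u.2.val < n := u.2.isLt
  have hj : v.2.val < n := v.2.isLt
  set p := u.1.val with hp0
  set q := v.1.val with hq0
  set i := u.2.val with hi0
  set j := v.2.val with hj0
  rcases h with ⟨h1, h2⟩ | ⟨h1, h2⟩
  · -- cycle edge
    have hpq : p = q := by rw [hp0, hq0, h1]
    rcases lt_or_ge (i + 1) n with hlt | hge
    · -- non-wrap: j = i + 1
      have hj1 : j = i + 1 := by rw [h2, Nat.mod_eq_of_lt hlt]
      unfold plab
      rw [← hp0, ← hq0, ← hi0, ← hj0]
      have hv : ¬ (n % 3 = 1 ∧ j = 0) := by omega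
      rw [if_neg hv]
      by_cases hu : n % 3 = 1 ∧ i = 0
      · rw [if_pos hu]
        -- swapped at u : i = 0
        interval_cases p
        · -- labels 3 and 5
          exact cop_conv (cop24 3 2 (by decide) (Or.inl rfl)) (by omega) (by omega)
        · -- labels 1 and 7
          exact cop_conv (Nat.coprime_one_left _) (by omega) rfl
      · rw [if_neg hu]
        -- labels differ by 4
        refine cop_conv (cop24 (4 * i + (2 * p + 1)) 4 ⟨2 * i + p, by ring⟩
          (Or.inr rfl)) rfl (by omega)
    · -- wrap: i = n - 1, j = 0
      have hin : i + 1 = n := by omega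
      have hj1 : j = 0 := by rw [h2, hin, Nat.mod_self]
      unfold plab
      rw [← hp0, ← hq0, ← hi0, ← hj0]
      have hu : ¬ (n % 3 = 1 ∧ i = 0) := by omega
      rw [if_neg hu]
      by_cases hv : n % 3 = 1 ∧ j = 0
      · rw [if_pos hv]
        interval_cases q
        · -- labels 4n-3 and 3
          refine cop_conv (cop3 (4 * i + (2 * p + 1)) (by omega)).symm rfl (by omega)
        · -- labels 4n-1 and 1
          exact cop_conv (Nat.coprime_one_right _) rfl (by omega)
      · rw [if_neg hv]
        have hn3 : n % 3 ≠ 1 := by omega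
        interval_cases q
        · -- labels 4n-3 and 1
          exact cop_conv (Nat.coprime_one_right _) rfl (by omega)
        · -- labels 4n-1 and 3
          refine cop_conv (cop3 (4 * i + (2 * p + 1)) (by omega)).symm rfl (by omega)
  · -- spoke edge
    have hij : i = j := by rw [hi0, hj0, h2]
    have hpq : p ≠ q := fun hc => h1 (Fin.ext hc)
    unfold plab
    rw [← hp0, ← hq0, ← hi0, ← hj0]
    by_cases hu : n % 3 = 1 ∧ i = 0
    · have hv : n % 3 = 1 ∧ j = 0 := by omega
      rw [if_pos hu, if_pos hv]
      interval_cases p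
      · exact cop_conv (Nat.coprime_one_right 3) (by omega) (by omega)
      · exact cop_conv (Nat.coprime_one_left 3) (by omega) (by omega)
    · have hv : ¬ (n % 3 = 1 ∧ j = 0) := by omega
      rw [if_neg hu, if_neg hv]
      interval_cases p
      · refine cop_conv (cop24 (4 * i + 1) 2 ⟨2 * i, by ring⟩ (Or.inl rfl))
          (by omega) (by omega)
      · refine cop_conv (cop24 (4 * i + 1) 2 ⟨2 * i, by ring⟩ (Or.inl rfl)).symm
          (by omega) (by omega)

/-- The prism graph `GP(n,1)` is odd prime for all `n ≥ 3`. -/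
theorem prismGraph_oddPrime (n : ℕ) (hn : 3 ≤ n) : IsOddPrime (prismGraph n) := by
  refine ⟨plab n, ?_, ?_, ?_⟩
  · intro a b h
    have hp := a.1.isLt
    have hq := b.1.isLt
    unfold plab at h
    have key : a.1.val = b.1.val ∧ a.2.val = b.2.val := by
      split_ifs at h <;> omega
    exact Prod.ext (Fin.ext key.1) (Fin.ext key.2)
  · intro v
    have hp := v.1.isLt
    have hq := v.2.isLt
    have hcard : Fintype.card (Fin 2 × Fin n) = 2 * n := by
      simp [Fintype.card_prod]
    constructor
    · rw [Nat.odd_iff]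
      unfold plab
      split_ifs <;> omega
    · rw [hcard]
      unfold plab
      split_ifs <;> omega
  · intro u v h
    rw [prismGraph, SimpleGraph.fromRel_adj] at h
    obtain ⟨-, hr | hr⟩ := h
    · exact plab_cop n hn u v hr
    · exact (plab_cop n hn v u hr).symm
end

section
/- For all n ≥ 1, the triangular stacked prism Y_{3,n} is odd prime. -/
/-- The stacked prism `Y_{k,n}` is the box (Cartesian) product `C_k □ P_n` of the
cycle on `k` vertices with the path on `n` vertices. -/
def stackedPrism (k n : ℕ) : SimpleGraph (Fin k × Fin n) :=
  (SimpleGraph.cycleGraph k).boxProd (SimpleGraph.pathGraph n)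

/-- The labeling: row `r` (along the path) gets labels `6r + {1,3,5}`, assigned to
the three cycle positions in order `1,3,5` on even rows and `1,5,3` on odd rows. -/
def lab3 (r c : ℕ) : ℕ :=
  6 * r + (if r % 2 = 0 then 2 * c + 1 else 2 * ((2 * c) % 3) + 1)

lemma cop_main (a c : ℕ) (ha2 : a % 2 = 1)
    (h : (c = 2 ∨ c = 4 ∨ c = 8) ∨ (c = 6 ∧ a % 3 = 1)) : Nat.Coprime a (a + c) := by
  have h1 : Nat.gcd a (a + c) ∣ a := Nat.gcd_dvd_left _ _
  have h2 : Nat.gcd a (a + c) ∣ a + c := Nat.gcd_dvd_right _ _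
  have h3 : Nat.gcd a (a + c) ∣ c := by
    have := Nat.dvd_sub h2 h1
    simpa using this
  set g := Nat.gcd a (a + c) with hg
  rcases h with h | ⟨rfl, h3a⟩
  · have h5 : g ≤ 8 := Nat.le_of_dvd (by omega)
      (by rcases h with rfl|rfl|rfl <;> [exact h3.trans ⟨4, rfl⟩; exact h3.trans ⟨2, rfl⟩; exact h3])
    interval_cases g <;> rcases h with rfl|rfl|rfl <;> omega
  · have h5 : g ≤ 6 := Nat.le_of_dvd (by norm_num) h3
    interval_cases g <;> omega

lemma cop_main' (a b : ℕ) (hab : a ≤ b) (ha2 : a % 2 = 1)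
    (h : (b - a = 2 ∨ b - a = 4 ∨ b - a = 8) ∨ (b - a = 6 ∧ a % 3 = 1)) :
    Nat.Coprime a b := by
  have := cop_main a (b - a) ha2 h
  rwa [Nat.add_sub_cancel' hab] at this

lemma cop_sym (a b : ℕ) (ha2 : a % 2 = 1) (hb2 : b % 2 = 1)
    (h3 : a % 3 = 1 ∧ b % 3 = 1 ∨ True)
    (h : (a ≤ b ∧ (b - a = 2 ∨ b - a = 4 ∨ b - a = 8 ∨ (b - a = 6 ∧ a % 3 = 1))) ∨
         (b ≤ a ∧ (a - b = 2 ∨ a - b = 4 ∨ a - b = 8 ∨ (a - b = 6 ∧ b % 3 = 1)))) :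
    Nat.Coprime a b := by
  rcases h with ⟨hle, h⟩ | ⟨hle, h⟩
  · exact cop_main' a b hle ha2 (by tauto)
  · exact (cop_main' b a hle hb2 (by tauto)).symm

/-- The triangular stacked prism `Y_{3,n}` is odd prime for all `n ≥ 1`. -/
theorem triangularStackedPrism_oddPrime (n : ℕ) (hn : 1 ≤ n) :
    IsOddPrime (stackedPrism 3 n) := by
  refine ⟨fun p => lab3 p.2.val p.1.val, ?_, ?_, ?_⟩
  · rintro ⟨c1, r1⟩ ⟨c2, r2⟩ h
    simp only [lab3] at h
    have hc1 := c1.isLt; have hc2 := c2.isLt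
    have hr : r1.val = r2.val := by split_ifs at h <;> omega
    have hc : c1.val = c2.val := by rw [hr] at h; split_ifs at h <;> omega
    exact Prod.ext (Fin.ext hc) (Fin.ext hr)
  · rintro ⟨c, r⟩
    simp only [lab3, Fintype.card_prod, Fintype.card_fin]
    have hc := c.isLt; have hr := r.isLt
    constructor
    · rw [Nat.odd_iff]; split_ifs <;> omega
    · split_ifs <;> omega
  · rintro ⟨c1, r1⟩ ⟨c2, r2⟩ h
    rw [stackedPrism, SimpleGraph.boxProd_adj] at h
    rcases h with ⟨hadj, heq⟩ | ⟨hadj, heq⟩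
    · have hne : c1 ≠ c2 := hadj.ne
      simp only at heq
      subst heq
      have hne' : c1.val ≠ c2.val := fun hh => hne (Fin.ext hh)
      have hc1 := c1.isLt; have hc2 := c2.isLt
      simp only [lab3]
      apply cop_sym
      · split_ifs <;> omega
      · split_ifs <;> omega
      · exact Or.inr trivial
      · split_ifs <;> interval_cases hv : c1.val <;> interval_cases hv2 : c2.val <;> omega
    · rw [SimpleGraph.pathGraph_adj] at hadj
      simp only at heq
      subst heq
      have key : ∀ r : ℕ, Nat.Coprime (lab3 r c1.val) (lab3 (r + 1) c1.val) := by
        intro r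
        have hc1 := c1.isLt
        simp only [lab3]
        apply cop_sym
        · split_ifs <;> omega
        · split_ifs <;> omega
        · exact Or.inr trivial
        · split_ifs <;> interval_cases hv : c1.val <;> omega
      rcases hadj with h | h
      · simpa only [show r2.val = r1.val + 1 from h.symm] using key r1.val
      · simpa only [show r1.val = r2.val + 1 from h.symm] using (key r2.val).symm
end

section
/- For all n ≥ 1, the pentagonal stacked prism Y_{5,n} is odd prime. -/
/-- The labeling table, with period 21 in the path direction. -/
def patT : List (List ℕ) :=
  [[1,3,5,7,9],[1,3,7,5,9],[1,3,7,9,5],[1,3,5,7,9],[1,3,7,5,9],[1,3,7,9,5],[1,3,5,7,9],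
   [1,3,7,5,9],[1,3,7,9,5],[1,3,5,7,9],[1,3,7,5,9],[1,5,7,3,9],[1,3,5,7,9],[1,3,7,5,9],
   [1,3,7,9,5],[1,3,5,7,9],[1,3,7,5,9],[1,3,7,9,5],[1,3,5,9,7],[1,3,7,9,5],[1,3,7,5,9]]

def pat (r j : ℕ) : ℕ := (patT.getD r []).getD j 0

lemma pat_facts : ∀ r < 21, ∀ j < 5, pat r j % 2 = 1 ∧ pat r j ≤ 9 := by decide

lemma pat_inj : ∀ r < 21, ∀ j < 5, ∀ j' < 5, pat r j = pat r j' → j = j' := by decide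

lemma vert_key : ∀ r < 21, ∀ j < 5,
    pat r j % 2 = 1 ∧ pat ((r+1) % 21) j % 2 = 1 ∧
    pat r j ≤ 9 ∧ pat ((r+1) % 21) j ≤ 9 ∧
    (10*r + pat r j) % 3 + (10*r + 10 + pat ((r+1) % 21) j) % 3 ≥ 1 ∧
    (10*r + pat r j) % 5 + (10*r + 10 + pat ((r+1) % 21) j) % 5 ≥ 1 ∧
    (10*r + pat r j) % 7 + (10*r + 10 + pat ((r+1) % 21) j) % 7 ≥ 1 := by decide

lemma cyc_key : ∀ r < 21, ∀ j < 5,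
    pat r j % 2 = 1 ∧ pat r ((j+1) % 5) % 2 = 1 ∧
    pat r j ≤ 9 ∧ pat r ((j+1) % 5) ≤ 9 ∧ pat r j ≠ pat r ((j+1) % 5) ∧
    (10*r + pat r j) % 3 + (10*r + pat r ((j+1) % 5)) % 3 ≥ 1 ∧
    (10*r + pat r j) % 5 + (10*r + pat r ((j+1) % 5)) % 5 ≥ 1 ∧
    (10*r + pat r j) % 7 + (10*r + pat r ((j+1) % 5)) % 7 ≥ 1 := by decide

lemma cop_main_s8 (x y : ℕ)
    (h : x % 2 = 1 ∧ y % 2 = 1 ∧ x ≠ y ∧ x < y + 19 ∧ y < x + 19 ∧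
      x % 3 + y % 3 ≥ 1 ∧ x % 5 + y % 5 ≥ 1 ∧ x % 7 + y % 7 ≥ 1) :
    Nat.Coprime x y := by
  obtain ⟨h2, h2y, hne, hb1, hb2, h3, h5, h7⟩ := h
  by_contra hg
  have hpp : (Nat.gcd x y).minFac.Prime := Nat.minFac_prime (fun h => hg h)
  set p := (Nat.gcd x y).minFac with hpdef
  have hpx : p ∣ x := (Nat.minFac_dvd _).trans (Nat.gcd_dvd_left _ _)
  have hpy : p ∣ y := (Nat.minFac_dvd _).trans (Nat.gcd_dvd_right _ _)
  have hple : p < 19 := by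
    rcases Nat.lt_or_ge x y with hlt | hge
    · have hd : p ∣ y - x := Nat.dvd_sub hpy hpx
      have := Nat.le_of_dvd (by omega) hd; omega
    · have hd : p ∣ x - y := Nat.dvd_sub hpx hpy
      have := Nat.le_of_dvd (by omega) hd; omega
  have h2le := hpp.two_le
  clear hg hpdef hpp
  interval_cases p <;> omega

lemma vert_cop (m j : ℕ) (hj : j < 5) :
    Nat.Coprime (10*m + pat (m % 21) j) (10*(m+1) + pat ((m+1) % 21) j) := by
  obtain ⟨q, r, hr, rfl⟩ : ∃ q r, r < 21 ∧ m = 21*q + r := ⟨m/21, m%21, by omega, by omega⟩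
  have h1 : (21*q+r) % 21 = r := by omega
  have h2 : (21*q+r+1) % 21 = (r+1) % 21 := by omega
  rw [h1, h2]
  obtain ⟨k1, k2, k3, k4, k5, k6, k7⟩ := vert_key r hr j hj
  have ex2 : (10*(21*q+r) + pat r j) % 2 = (pat r j) % 2 := by
    rw [show 10*(21*q+r) + pat r j = pat r j + 2*(5*(21*q+r)) by ring,
      Nat.add_mul_mod_self_left]
  have ey2 : (10*(21*q+r+1) + pat ((r+1) % 21) j) % 2 = (pat ((r+1) % 21) j) % 2 := by
    rw [show 10*(21*q+r+1) + pat ((r+1) % 21) j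
        = pat ((r+1) % 21) j + 2*(5*(21*q+r+1)) by ring, Nat.add_mul_mod_self_left]
  have ex3 : (10*(21*q+r) + pat r j) % 3 = (10*r + pat r j) % 3 := by
    rw [show 10*(21*q+r) + pat r j = (10*r + pat r j) + 3*(70*q) by ring,
      Nat.add_mul_mod_self_left]
  have ey3 : (10*(21*q+r+1) + pat ((r+1) % 21) j) % 3
      = (10*r + 10 + pat ((r+1) % 21) j) % 3 := by
    rw [show 10*(21*q+r+1) + pat ((r+1) % 21) j
        = (10*r + 10 + pat ((r+1) % 21) j) + 3*(70*q) by ring, Nat.add_mul_mod_self_left]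
  have ex5 : (10*(21*q+r) + pat r j) % 5 = (10*r + pat r j) % 5 := by
    rw [show 10*(21*q+r) + pat r j = (10*r + pat r j) + 5*(42*q) by ring,
      Nat.add_mul_mod_self_left]
  have ey5 : (10*(21*q+r+1) + pat ((r+1) % 21) j) % 5
      = (10*r + 10 + pat ((r+1) % 21) j) % 5 := by
    rw [show 10*(21*q+r+1) + pat ((r+1) % 21) j
        = (10*r + 10 + pat ((r+1) % 21) j) + 5*(42*q) by ring, Nat.add_mul_mod_self_left]
  have ex7 : (10*(21*q+r) + pat r j) % 7 = (10*r + pat r j) % 7 := by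
    rw [show 10*(21*q+r) + pat r j = (10*r + pat r j) + 7*(30*q) by ring,
      Nat.add_mul_mod_self_left]
  have ey7 : (10*(21*q+r+1) + pat ((r+1) % 21) j) % 7
      = (10*r + 10 + pat ((r+1) % 21) j) % 7 := by
    rw [show 10*(21*q+r+1) + pat ((r+1) % 21) j
        = (10*r + 10 + pat ((r+1) % 21) j) + 7*(30*q) by ring, Nat.add_mul_mod_self_left]
  exact cop_main_s8 _ _ (by omega)

lemma cyc_cop (m j : ℕ) (hj : j < 5) :
    Nat.Coprime (10*m + pat (m % 21) j) (10*m + pat (m % 21) ((j+1) % 5)) := by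
  obtain ⟨q, r, hr, rfl⟩ : ∃ q r, r < 21 ∧ m = 21*q + r := ⟨m/21, m%21, by omega, by omega⟩
  have h1 : (21*q+r) % 21 = r := by omega
  rw [h1]
  obtain ⟨k1, k2, k3, k4, k5, k6, k7, k8⟩ := cyc_key r hr j hj
  have key : ∀ c p q' : ℕ, 0 < p → p * q' = 210 →
      (10*(21*q+r) + c) % p = (10*r + c) % p := by
    intro c p q' hp hpq
    rw [show 10*(21*q+r) + c = (10*r + c) + p*(q'*q) by rw [← Nat.mul_assoc, hpq]; ring,
      Nat.add_mul_mod_self_left]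
  have ex2 := key (pat r j) 2 105 (by norm_num) (by norm_num)
  have ey2 := key (pat r ((j+1) % 5)) 2 105 (by norm_num) (by norm_num)
  have ex3 := key (pat r j) 3 70 (by norm_num) (by norm_num)
  have ey3 := key (pat r ((j+1) % 5)) 3 70 (by norm_num) (by norm_num)
  have ex5 := key (pat r j) 5 42 (by norm_num) (by norm_num)
  have ey5 := key (pat r ((j+1) % 5)) 5 42 (by norm_num) (by norm_num)
  have ex7 := key (pat r j) 7 30 (by norm_num) (by norm_num)
  have ey7 := key (pat r ((j+1) % 5)) 7 30 (by norm_num) (by norm_num)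
  exact cop_main_s8 _ _ (by omega)

/-- The pentagonal stacked prism `Y_{5,n}` is odd prime for all `n ≥ 1`. -/
theorem pentagonalStackedPrism_oddPrime (n : ℕ) (hn : 1 ≤ n) :
    IsOddPrime (stackedPrism 5 n) := by
  refine ⟨fun p => 10 * p.2.val + pat (p.2.val % 21) p.1.val, ?_, ?_, ?_⟩
  · rintro ⟨a, i⟩ ⟨b, i'⟩ h
    simp only at h
    obtain ⟨hpa, hpa9⟩ := pat_facts (i.val % 21) (by omega) a.val a.isLt
    obtain ⟨hpb, hpb9⟩ := pat_facts (i'.val % 21) (by omega) b.val b.isLt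
    have hi : i.val = i'.val := by omega
    have hp : pat (i'.val % 21) a.val = pat (i'.val % 21) b.val := by
      rw [← hi] at h ⊢; omega
    have := pat_inj (i'.val % 21) (by omega) a.val a.isLt b.val b.isLt hp
    exact Prod.ext (Fin.ext this) (Fin.ext hi)
  · rintro ⟨a, i⟩
    obtain ⟨hpa, hpa9⟩ := pat_facts (i.val % 21) (by omega) a.val a.isLt
    have hilt := i.isLt
    constructor
    · refine Nat.odd_iff.mpr ?_
      show (10 * i.val + pat (i.val % 21) a.val) % 2 = 1
      omega
    · simp only [Fintype.card_prod, Fintype.card_fin]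
      show 10 * i.val + pat (i.val % 21) a.val ≤ 2 * (5 * n) - 1
      omega
  · rintro ⟨a, i⟩ ⟨b, i'⟩ hadj
    rcases hadj with ⟨hc, hi⟩ | ⟨hp, hab⟩
    · simp only at hc hi
      cases hi
      show Nat.Coprime (10*i.val + pat (i.val % 21) a.val) (10*i.val + pat (i.val % 21) b.val)
      rw [SimpleGraph.cycleGraph_adj'] at hc
      simp only [Fin.sub_def] at hc
      have ha := a.isLt; have hb := b.isLt
      have hd : (a.val+1) % 5 = b.val ∨ (b.val+1) % 5 = a.val := by omega
      rcases hd with hd | hd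
      · rw [← hd]; exact cyc_cop i.val a.val a.isLt
      · rw [← hd]; exact (cyc_cop i.val b.val b.isLt).symm
    · simp only at hp hab
      cases hab
      rw [SimpleGraph.pathGraph_adj] at hp
      show Nat.Coprime (10*i.val + pat (i.val % 21) a.val) (10*i'.val + pat (i'.val % 21) a.val)
      rcases hp with h | h
      · rw [show i'.val = i.val + 1 from h.symm]
        exact vert_cop i.val a.val a.isLt
      · rw [show i.val = i'.val + 1 from h.symm]
        exact (vert_cop i'.val a.val a.isLt).symm
end

section
/- For all n ≥ 1, the hexagonal stacked prism Y_{6,n} is odd prime. -/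
/-- Offsets for the labeling: row of even index uses `[1,3,5,11,9,7]`,
row of odd index uses `[1,7,9,11,5,3]`. -/
def hexOff (r : ℕ) : Fin 6 → ℕ :=
  if r % 2 = 1 then ![1, 7, 9, 11, 5, 3] else ![1, 3, 5, 11, 9, 7]

lemma hexOff_even (r : ℕ) (hr : r % 2 = 0) : hexOff r = ![1, 3, 5, 11, 9, 7] := by
  unfold hexOff; rw [if_neg (by omega)]

lemma hexOff_odd (r : ℕ) (hr : r % 2 = 1) : hexOff r = ![1, 7, 9, 11, 5, 3] := by
  unfold hexOff; rw [if_pos hr]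

lemma hexOff_mem (r : ℕ) (j : Fin 6) :
    1 ≤ hexOff r j ∧ hexOff r j ≤ 11 ∧ hexOff r j % 2 = 1 := by
  unfold hexOff; split <;> (revert j; decide)

lemma hexOff_inj (r : ℕ) : Function.Injective (hexOff r) := by
  unfold hexOff; split <;> (intro a b; revert a b; decide)

lemma hexVec_eval_0 (a b c d e f : ℕ) (h : 0 < 6) : ![a, b, c, d, e, f] (⟨0, h⟩ : Fin 6) = a := rfl
lemma hexVec_eval_1 (a b c d e f : ℕ) (h : 1 < 6) : ![a, b, c, d, e, f] (⟨1, h⟩ : Fin 6) = b := rfl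
lemma hexVec_eval_2 (a b c d e f : ℕ) (h : 2 < 6) : ![a, b, c, d, e, f] (⟨2, h⟩ : Fin 6) = c := rfl
lemma hexVec_eval_3 (a b c d e f : ℕ) (h : 3 < 6) : ![a, b, c, d, e, f] (⟨3, h⟩ : Fin 6) = d := rfl
lemma hexVec_eval_4 (a b c d e f : ℕ) (h : 4 < 6) : ![a, b, c, d, e, f] (⟨4, h⟩ : Fin 6) = e := rfl
lemma hexVec_eval_5 (a b c d e f : ℕ) (h : 5 < 6) : ![a, b, c, d, e, f] (⟨5, h⟩ : Fin 6) = f := rfl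

/-- The explicit odd prime labeling of `Y_{6,n}`. -/
def hexLabel (n : ℕ) (p : Fin 6 × Fin n) : ℕ := 12 * p.2.1 + hexOff p.2.1 p.1

/-- Two odd numbers whose difference `d` divides 48, with a 3-divisibility
escape clause, are coprime. -/
lemma key2 (x y d : ℕ) (hx : x % 2 = 1) (hd : (y - x) + (x - y) = d) (hdvd : d ∣ 48)
    (h3 : d % 3 = 0 → x % 3 ≠ 0) : Nat.Coprime x y := by
  have hgx : Nat.gcd x y ∣ x := Nat.gcd_dvd_left _ _
  have hgy : Nat.gcd x y ∣ y := Nat.gcd_dvd_right _ _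
  have hgd : Nat.gcd x y ∣ d := by
    rw [← hd]; exact Nat.dvd_add (Nat.dvd_sub hgy hgx) (Nat.dvd_sub hgx hgy)
  have hg48 : Nat.gcd x y ∣ 48 := hgd.trans hdvd
  have h2 : ¬ (2 ∣ Nat.gcd x y) := by
    intro h; have := h.trans hgx; omega
  have hle : Nat.gcd x y ≤ 48 := Nat.le_of_dvd (by norm_num) hg48
  have h13 : Nat.gcd x y = 1 ∨ Nat.gcd x y = 3 := by
    interval_cases h : (Nat.gcd x y) <;> omega
  rcases h13 with h | h
  · exact h
  · exfalso
    rw [h] at hgd hgx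
    exact h3 (by omega) (by omega)

/-- The hexagonal stacked prism `Y_{6,n}` is odd prime for all `n ≥ 1`. -/
theorem hexagonalStackedPrism_oddPrime (n : ℕ) (hn : 1 ≤ n) :
    IsOddPrime (stackedPrism 6 n) := by
  refine ⟨hexLabel n, ?_, ?_, ?_⟩
  · rintro ⟨j, i⟩ ⟨j', i'⟩ h
    unfold hexLabel at h
    simp only at h
    have m1 := hexOff_mem i.1 j
    have m2 := hexOff_mem i'.1 j'
    have hi : i.1 = i'.1 := by omega
    have ha : hexOff i.1 j = hexOff i.1 j' := by rw [hi] at h ⊢; omega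
    have hj : j = j' := hexOff_inj i.1 ha
    exact Prod.ext hj (Fin.ext hi)
  · rintro ⟨j, i⟩
    unfold hexLabel
    simp only [Fintype.card_prod, Fintype.card_fin]
    have m := hexOff_mem i.1 j
    have hlt := i.2
    constructor
    · rw [Nat.odd_iff]; omega
    · omega
  · rintro ⟨j, i⟩ ⟨j', i'⟩ hadj
    unfold hexLabel
    simp only
    rw [stackedPrism, SimpleGraph.boxProd_adj] at hadj
    simp only at hadj
    rcases hadj with ⟨hc, heq⟩ | ⟨hp, heq⟩
    · -- cycle edge within a row
      subst heq
      rcases Nat.mod_two_eq_zero_or_one i.1 with h2 | h2 <;>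
        [rw [hexOff_even i.1 h2]; rw [hexOff_odd i.1 h2]] <;>
      fin_cases j <;> fin_cases j' <;>
        first
          | exact absurd hc (by decide)
          | (simp only [hexVec_eval_0, hexVec_eval_1, hexVec_eval_2,
              hexVec_eval_3, hexVec_eval_4, hexVec_eval_5]
             first
              | exact key2 _ _ 2 (by omega) (by omega) (by norm_num) (by omega)
              | exact key2 _ _ 4 (by omega) (by omega) (by norm_num) (by omega)
              | exact key2 _ _ 6 (by omega) (by omega) (by norm_num) (by omega)
              | exact key2 _ _ 8 (by omega) (by omega) (by norm_num) (by omega)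
              | exact key2 _ _ 12 (by omega) (by omega) (by norm_num) (by omega)
              | exact key2 _ _ 16 (by omega) (by omega) (by norm_num) (by omega))
    · -- path edge between consecutive rows
      subst heq
      rw [SimpleGraph.pathGraph_adj] at hp
      have h3 : i'.1 % 2 = 1 - i.1 % 2 := by omega
      rcases Nat.mod_two_eq_zero_or_one i.1 with h2 | h2 <;> rw [h2] at h3 <;>
        norm_num at h3 <;>
        [(rw [hexOff_even i.1 h2, hexOff_odd i'.1 h3]);
         (rw [hexOff_odd i.1 h2, hexOff_even i'.1 h3])] <;>
      rcases hp with h | h <;>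
      fin_cases j <;>
        (simp only [hexVec_eval_0, hexVec_eval_1, hexVec_eval_2,
              hexVec_eval_3, hexVec_eval_4, hexVec_eval_5]
         first
          | exact key2 _ _ 2 (by omega) (by omega) (by norm_num) (by omega)
          | exact key2 _ _ 4 (by omega) (by omega) (by norm_num) (by omega)
          | exact key2 _ _ 6 (by omega) (by omega) (by norm_num) (by omega)
          | exact key2 _ _ 8 (by omega) (by omega) (by norm_num) (by omega)
          | exact key2 _ _ 12 (by omega) (by omega) (by norm_num) (by omega)
          | exact key2 _ _ 16 (by omega) (by omega) (by norm_num) (by omega))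
end

section
/- For all m ≥ 2 and n ≥ 1, the 2^m-sided polygonal stacked prism Y_{2^m, n} is odd prime. -/
namespace OddPrimeAux

/-- Gray code -/
def gray (x : ℕ) : ℕ := x ^^^ x / 2

lemma xor_div_two (x y : ℕ) : (x ^^^ y) / 2 = x / 2 ^^^ y / 2 := by
  have h : ∀ z : ℕ, z / 2 = z >>> 1 := fun z => (Nat.shiftRight_one z).symm
  rw [h, h, h]
  apply Nat.eq_of_testBit_eq
  intro i
  simp [Nat.testBit_shiftRight]

lemma gray_inj : ∀ x y : ℕ, gray x = gray y → x = y := by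
  intro x
  induction x using Nat.strong_induction_on with
  | _ x ih =>
    intro y h
    rcases Nat.eq_zero_or_pos x with hx | hx
    · subst hx
      have h0 : y ^^^ y / 2 = 0 := h.symm
      have := xor_eq_zero_iff.mp h0
      omega
    · have h2 : gray (x / 2) = gray (y / 2) := by
        show x / 2 ^^^ x / 2 / 2 = y / 2 ^^^ y / 2 / 2
        rw [← xor_div_two, ← xor_div_two]
        exact congrArg (· / 2) h
      have hxy2 : x / 2 = y / 2 := ih (x / 2) (by omega) _ h2
      have h3 : x ^^^ x / 2 = y ^^^ x / 2 := by
        have h' : x ^^^ x / 2 = y ^^^ y / 2 := h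
        rw [h', hxy2]
      exact Nat.xor_left_inj.mp h3

lemma gray_lt {m x : ℕ} (hx : x < 2 ^ m) : gray x < 2 ^ m :=
  Nat.xor_lt_two_pow hx (lt_of_le_of_lt (Nat.div_le_self _ _) hx)

lemma xor_formula (a b r1 r2 : ℕ) (h1 : r1 ≤ 1) (h2 : r2 ≤ 1) :
    (2 * a + r1) ^^^ (2 * b + r2) = 2 * (a ^^^ b) + (if r1 = r2 then 0 else 1) := by
  have hf : ∀ n : ℕ, Nat.bit false n = 2 * n := fun n => congrFun Nat.bit_false n
  have ht : ∀ n : ℕ, Nat.bit true n = 2 * n + 1 := fun n => congrFun Nat.bit_true n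
  rcases Nat.le_one_iff_eq_zero_or_eq_one.mp h1 with rfl | rfl <;>
    rcases Nat.le_one_iff_eq_zero_or_eq_one.mp h2 with rfl | rfl
  · simpa [hf] using Nat.xor_bit false a false b
  · simpa [hf, ht] using Nat.xor_bit false a true b
  · simpa [hf, ht] using Nat.xor_bit true a false b
  · simpa [hf, ht] using Nat.xor_bit true a true b

lemma xor_succ : ∀ x : ℕ, ∃ s, x ^^^ (x + 1) = 2 ^ (s + 1) - 1 := by
  intro x
  induction x using Nat.strong_induction_on with
  | _ x ih =>
    rcases Nat.even_or_odd x with ⟨a, ha⟩ | ⟨a, ha⟩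
    · refine ⟨0, ?_⟩
      have h5 : x ^^^ (x + 1) = (2 * a + 0) ^^^ (2 * a + 1) := by congr 1 <;> omega
      have h3 := xor_formula a a 0 1 (by omega) (by omega)
      simp only [Nat.xor_self, if_neg (by omega : ¬(0 : ℕ) = 1)] at h3
      have hp : (2 : ℕ) ^ (0 + 1) = 2 := by norm_num
      omega
    · have hax : a < x := by omega
      obtain ⟨s, hs⟩ := ih a hax
      refine ⟨s + 1, ?_⟩
      have h5 : x ^^^ (x + 1) = (2 * a + 1) ^^^ (2 * (a + 1) + 0) := by congr 1 <;> omega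
      have h3 := xor_formula a (a + 1) 1 0 (by omega) (by omega)
      simp only [if_neg (by omega : ¬(1 : ℕ) = 0)] at h3
      have hp : 1 ≤ 2 ^ (s + 1) := Nat.one_le_two_pow
      have hpow : 2 ^ (s + 1 + 1) = 2 * 2 ^ (s + 1) := by ring
      omega

lemma pow_xor_pred : ∀ s : ℕ, 2 ^ s ^^^ (2 ^ s - 1) = 2 ^ (s + 1) - 1 := by
  intro s
  induction s with
  | zero => decide
  | succ s ih =>
    have hp : 1 ≤ 2 ^ s := Nat.one_le_two_pow
    have hpow : 2 ^ (s + 1) = 2 * 2 ^ s := by ring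
    have hpow2 : 2 ^ (s + 1 + 1) = 2 * 2 ^ (s + 1) := by ring
    have h5 : 2 ^ (s + 1) ^^^ (2 ^ (s + 1) - 1) = (2 * 2 ^ s + 0) ^^^ (2 * (2 ^ s - 1) + 1) := by
      congr 1 <;> omega
    have h3 := xor_formula (2 ^ s) (2 ^ s - 1) 0 1 (by omega) (by omega)
    simp only [if_neg (by omega : ¬(0 : ℕ) = 1)] at h3
    omega

lemma gray_succ (x : ℕ) : ∃ s, gray x ^^^ gray (x + 1) = 2 ^ s := by
  obtain ⟨s, hs⟩ := xor_succ x
  refine ⟨s, ?_⟩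
  show (x ^^^ x / 2) ^^^ ((x + 1) ^^^ (x + 1) / 2) = 2 ^ s
  have h1 : (x ^^^ x / 2) ^^^ ((x + 1) ^^^ (x + 1) / 2)
      = (x ^^^ (x + 1)) ^^^ (x / 2 ^^^ (x + 1) / 2) := by
    rw [Nat.xor_assoc, Nat.xor_assoc]
    congr 1
    rw [← Nat.xor_assoc, ← Nat.xor_assoc, Nat.xor_comm (x / 2)]
  rw [h1, ← xor_div_two, hs]
  have hp : 1 ≤ 2 ^ (s + 1) := Nat.one_le_two_pow
  have hdiv : (2 ^ (s + 1) - 1) / 2 = 2 ^ s - 1 := by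
    have : 2 ^ (s + 1) = 2 * 2 ^ s := by ring
    omega
  rw [hdiv, ← pow_xor_pred s, Nat.xor_assoc, Nat.xor_self, Nat.xor_zero]

lemma xor_pow_of_not_testBit : ∀ t x : ℕ, x.testBit t = false → x ^^^ 2 ^ t = x + 2 ^ t := by
  intro t
  induction t with
  | zero =>
    intro x hx
    have hx2 : x % 2 = 0 := by simpa [Nat.testBit_zero] using hx
    have h5 : x ^^^ 2 ^ 0 = (2 * (x / 2) + 0) ^^^ (2 * 0 + 1) := by congr 1 <;> omega
    have h3 := xor_formula (x / 2) 0 0 1 (by omega) (by omega)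
    simp only [Nat.xor_zero, if_neg (by omega : ¬(0 : ℕ) = 1)] at h3
    omega
  | succ t ih =>
    intro x hx
    have hbit : (x / 2).testBit t = false := by
      rw [← Nat.testBit_succ]; exact hx
    have hx2 := ih (x / 2) hbit
    have hpow : 2 ^ (t + 1) = 2 * 2 ^ t := by ring
    have h5 : x ^^^ 2 ^ (t + 1) = (2 * (x / 2) + x % 2) ^^^ (2 * 2 ^ t + 0) := by
      congr 1 <;> omega
    have h3 := xor_formula (x / 2) (2 ^ t) (x % 2) 0 (by omega) (by omega)
    rcases Nat.even_or_odd x with ⟨a, ha⟩ | ⟨a, ha⟩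
    · simp only [if_pos (by omega : x % 2 = 0)] at h3
      omega
    · simp only [if_neg (by omega : ¬x % 2 = 0)] at h3
      omega

lemma diff_of_xor_pow {x y t : ℕ} (h : x ^^^ y = 2 ^ t) : y = x + 2 ^ t ∨ x = y + 2 ^ t := by
  have hy : y = x ^^^ 2 ^ t := by
    rw [← h, ← Nat.xor_assoc, Nat.xor_self, Nat.zero_xor]
  rcases hb : x.testBit t with _ | _
  · left
    rw [hy]
    exact xor_pow_of_not_testBit t x hb
  · right
    have hyb : y.testBit t = false := by
      rw [hy, Nat.testBit_xor, hb, Nat.testBit_two_pow_self]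
      rfl
    have hx : x = y ^^^ 2 ^ t := by
      rw [hy, Nat.xor_assoc, Nat.xor_self, Nat.xor_zero]
    rw [hx]
    exact xor_pow_of_not_testBit t y hyb

lemma coprime_of_add_pow {a b : ℕ} (t : ℕ) (h : b = a + 2 ^ t) :
    Nat.Coprime (2 * a + 1) (2 * b + 1) := by
  set d := Nat.gcd (2 * a + 1) (2 * b + 1) with hd
  have hd1 : d ∣ 2 * a + 1 := Nat.gcd_dvd_left _ _
  have hd2 : d ∣ 2 * b + 1 := Nat.gcd_dvd_right _ _
  have hdiff : d ∣ 2 ^ (t + 1) := by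
    have hsub := Nat.dvd_sub hd2 hd1
    have heq : 2 * b + 1 - (2 * a + 1) = 2 ^ (t + 1) := by
      subst h
      have : 2 ^ (t + 1) = 2 * 2 ^ t := by ring
      omega
    rwa [heq] at hsub
  have hodd : Odd d := by
    rcases Nat.even_or_odd d with he | ho
    · exfalso
      have h2d : (2 : ℕ) ∣ d := he.two_dvd
      obtain ⟨f, hf⟩ := h2d.trans hd1
      omega
    · exact ho
  have hc2 : Nat.Coprime d (2 ^ (t + 1)) :=
    Nat.Coprime.pow_right _ (Nat.coprime_two_right.mpr hodd)
  have hdvd1 : d ∣ 1 := hc2 ▸ Nat.dvd_gcd dvd_rfl hdiff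
  exact Nat.dvd_one.mp hdvd1

lemma coprime_of_xor_pow {R c d s : ℕ} (h : c ^^^ d = 2 ^ s) :
    Nat.Coprime (2 * (R + c) + 1) (2 * (R + d) + 1) := by
  rcases diff_of_xor_pow h with h1 | h1
  · exact coprime_of_add_pow s (by omega)
  · exact (coprime_of_add_pow (a := R + d) (b := R + c) s (by omega)).symm

lemma gray_last (m : ℕ) : gray (2 ^ (m + 1) - 1) = 2 ^ m := by
  show (2 ^ (m + 1) - 1) ^^^ (2 ^ (m + 1) - 1) / 2 = 2 ^ m
  have hp : 1 ≤ 2 ^ m := Nat.one_le_two_pow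
  have hpow : 2 ^ (m + 1) = 2 * 2 ^ m := by ring
  have hdiv : (2 ^ (m + 1) - 1) / 2 = 2 ^ m - 1 := by omega
  rw [hdiv, ← pow_xor_pred m, Nat.xor_assoc, Nat.xor_self, Nat.xor_zero]

lemma cyc_cop (m R a b : ℕ) (hm : 1 ≤ m) (hb : b < 2 ^ m) (hab : a = (b + 1) % 2 ^ m) :
    Nat.Coprime (2 * (R + gray a) + 1) (2 * (R + gray b) + 1) := by
  rcases lt_or_ge (b + 1) (2 ^ m) with hlt | hge
  · have ha : a = b + 1 := by rw [hab, Nat.mod_eq_of_lt hlt]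
    obtain ⟨s, hs⟩ := gray_succ b
    rw [← ha] at hs
    exact (coprime_of_xor_pow hs).symm
  · have hb1 : b + 1 = 2 ^ m := by omega
    have ha : a = 0 := by rw [hab, hb1, Nat.mod_self]
    obtain ⟨m', rfl⟩ : ∃ m', m = m' + 1 := ⟨m - 1, by omega⟩
    have hgb : gray b = 2 ^ m' := by
      have : b = 2 ^ (m' + 1) - 1 := by omega
      rw [this, gray_last]
    have hga : gray a = 0 := by rw [ha]; rfl
    have hx : gray a ^^^ gray b = 2 ^ m' := by rw [hga, hgb, Nat.zero_xor]
    exact coprime_of_xor_pow hx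


end OddPrimeAux

/-- The `2^m`-sided polygonal stacked prism `Y_{2^m, n}` is odd prime for all `m ≥ 2`
and `n ≥ 1`. -/
theorem powOfTwoStackedPrism_oddPrime (m n : ℕ) (hm : 2 ≤ m) (hn : 1 ≤ n) :
    IsOddPrime (stackedPrism (2 ^ m) n) := by
  classical
  set k := 2 ^ m with hk
  have hk1 : 1 < k := by
    have : 2 ^ 1 ≤ 2 ^ m := Nat.pow_le_pow_right (by norm_num) (by omega)
    simpa [hk] using by omega
  have hk0 : 0 < k := by omega
  refine ⟨fun p => 2 * (p.2.val * k + OddPrimeAux.gray p.1.val) + 1, ?_, ?_, ?_⟩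
  · -- injective
    rintro ⟨j, i⟩ ⟨j', i'⟩ h
    simp only at h
    have h1 : i.val * k + OddPrimeAux.gray j.val = i'.val * k + OddPrimeAux.gray j'.val := by
      omega
    have e1 : (i.val * k + OddPrimeAux.gray j.val) % k = OddPrimeAux.gray j.val := by
      rw [Nat.add_comm, Nat.add_mul_mod_self_right]
      exact Nat.mod_eq_of_lt (OddPrimeAux.gray_lt j.isLt)
    have e2 : (i'.val * k + OddPrimeAux.gray j'.val) % k = OddPrimeAux.gray j'.val := by
      rw [Nat.add_comm, Nat.add_mul_mod_self_right]
      exact Nat.mod_eq_of_lt (OddPrimeAux.gray_lt j'.isLt)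
    have hg : OddPrimeAux.gray j.val = OddPrimeAux.gray j'.val := by
      rw [← e1, ← e2, h1]
    have hj : j = j' := Fin.ext (OddPrimeAux.gray_inj _ _ hg)
    have hi : i = i' := by
      have h2 : i.val * k = i'.val * k := by omega
      exact Fin.ext (Nat.eq_of_mul_eq_mul_right hk0 h2)
    rw [hj, hi]
  · -- bounds
    rintro ⟨j, i⟩
    constructor
    · exact ⟨i.val * k + OddPrimeAux.gray j.val, by ring⟩
    · show 2 * (i.val * k + OddPrimeAux.gray j.val) + 1 ≤ 2 * Fintype.card (Fin k × Fin n) - 1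
      have hcard : Fintype.card (Fin k × Fin n) = k * n := by simp
      have hgl : OddPrimeAux.gray j.val < k := OddPrimeAux.gray_lt j.isLt
      have h1 : i.val * k + k ≤ n * k :=
        calc i.val * k + k = (i.val + 1) * k := (Nat.succ_mul _ _).symm
        _ ≤ n * k := Nat.mul_le_mul_right k (by omega)
      have h2 : n * k = k * n := Nat.mul_comm _ _
      rw [hcard]
      omega
  · -- adjacency
    rintro ⟨j, i⟩ ⟨j', i'⟩ hadj
    rw [stackedPrism, SimpleGraph.boxProd_adj] at hadj
    show Nat.Coprime (2 * (i.val * k + OddPrimeAux.gray j.val) + 1)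
      (2 * (i'.val * k + OddPrimeAux.gray j'.val) + 1)
    rcases hadj with ⟨hc, hi⟩ | ⟨hp, hq⟩
    · -- cycle edge, same row
      have hc' : (SimpleGraph.cycleGraph k).Adj j j' := hc
      rw [SimpleGraph.cycleGraph_adj'] at hc'
      have hc := hc'
      have hi' : i = i' := hi
      have hii : i.val = i'.val := by rw [hi']
      haveI : NeZero k := ⟨by omega⟩
      have hval1 : (1 : Fin k).val = 1 := by
        rw [Fin.val_one']
        exact Nat.mod_eq_of_lt hk1
      rcases hc with h1 | h1
      · -- j - j' = 1, so j = 1 + j'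
        have : j - j' = 1 := Fin.ext (by rw [h1, hval1])
        have hj : j = 1 + j' := by
          rw [← this]; abel
        have hv : j.val = (j'.val + 1) % k := by
          rw [hj, Fin.add_def, hval1, Nat.add_comm]
        rw [hii]
        exact OddPrimeAux.cyc_cop m (i'.val * k) j.val j'.val (by omega) j'.isLt hv
      · have : j' - j = 1 := Fin.ext (by rw [h1, hval1])
        have hj : j' = 1 + j := by
          rw [← this]; abel
        have hv : j'.val = (j.val + 1) % k := by
          rw [hj, Fin.add_def, hval1, Nat.add_comm]
        rw [hii]
        exact (OddPrimeAux.cyc_cop m (i'.val * k) j'.val j.val (by omega) j.isLt hv).symm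
    · -- path edge, same column
      have hq' : (SimpleGraph.pathGraph n).Adj i i' := hp
      rw [SimpleGraph.pathGraph_adj] at hq'
      have hp' : j = j' := hq
      have hjj : OddPrimeAux.gray j.val = OddPrimeAux.gray j'.val := by rw [hp']
      have h1 := hq'
      rcases hq' with h1 | h1
      · have hmul : i'.val * k = i.val * k + k := by rw [← h1]; ring
        refine OddPrimeAux.coprime_of_add_pow m ?_
        rw [hjj]
        omega
      · refine (OddPrimeAux.coprime_of_add_pow (a := i'.val * k + OddPrimeAux.gray j'.val) m ?_).symm
        have hmul : i.val * k = i'.val * k + k := by rw [← h1]; ring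
        rw [hjj]
        omega
end

section
/- The grid graph P_m × P_n (the Cartesian product of the path on m vertices with the path on n vertices) is odd prime for m = 3, m = 5, m = 6, and m = 2^k with k ≥ 2, and for any n ≥ 1. -/
/-- The grid graph `P_m × P_n` is the box (Cartesian) product of the path on `m`
vertices with the path on `n` vertices. -/
def gridGraph (m n : ℕ) : SimpleGraph (Fin m × Fin n) :=
  (SimpleGraph.pathGraph m).boxProd (SimpleGraph.pathGraph n)

/-- Key coprimality lemma: if `a` is odd, `d` divides a power of `2*m*P`, and
`2*m*r + a` is coprime to `d`, then `2*m*(r+P*t) + a` is coprime to its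
translate by `d`. -/
lemma cop_key (m P r t a d : ℕ) (ha : Odd a) (hd : d ∣ (2 * m * P) ^ 10)
    (hco : Nat.Coprime (2 * m * r + a) d) :
    Nat.Coprime (2 * m * (r + P * t) + a) (2 * m * (r + P * t) + a + d) := by
  set x := 2 * m * (r + P * t) + a with hx
  have h1 : Nat.Coprime x d := by
    rw [Nat.coprime_iff_gcd_eq_one]
    by_contra hne
    obtain ⟨q, hq, hqg⟩ := Nat.exists_prime_and_dvd hne
    have hqx : q ∣ x := hqg.trans (Nat.gcd_dvd_left _ _)
    have hqd : q ∣ d := hqg.trans (Nat.gcd_dvd_right _ _)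
    have hq2 : q ≠ 2 := by
      rintro rfl
      have hodd : Odd x := by
        have he : Even (2 * m * (r + P * t)) := ⟨m * (r + P * t), by ring⟩
        exact he.add_odd ha
      rcases hodd with ⟨c, hc⟩
      rcases hqx with ⟨e, he⟩
      omega
    have hqmP : q ∣ 2 * m * P := hq.dvd_of_dvd_pow (hqd.trans hd)
    have hxeq : x = (2 * m * r + a) + (2 * m * P) * t := by rw [hx]; ring
    have hq3 : q ∣ 2 * m * r + a := by
      have h := Nat.dvd_sub hqx (hqmP.mul_right t)
      rwa [hxeq, Nat.add_sub_cancel] at h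
    have : q ∣ 1 := hco ▸ Nat.dvd_gcd hq3 hqd
    exact hq.one_lt.ne' (Nat.dvd_one.mp this)
  have h2 : Nat.Coprime x (d + x) := Nat.coprime_add_self_right.mpr h1
  rwa [add_comm d x] at h2

/-- Main construction lemma: a periodic column pattern satisfying the arithmetic
side conditions yields an odd prime labeling of the grid graph. -/
lemma isOddPrime_grid_of_pattern (m n P : ℕ) (hm : 0 < m) (hP : 0 < P)
    (π : ℕ → ℕ → ℕ)
    (hodd : ∀ r < P, ∀ i < m, Odd (π r i))
    (hub : ∀ r < P, ∀ i < m, π r i ≤ 2 * m - 1)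
    (hinj : ∀ r < P, ∀ i < m, ∀ i' < m, π r i = π r i' → i = i')
    (hvert : ∀ r < P, ∀ i < m - 1,
      (max (π r i) (π r (i+1)) - min (π r i) (π r (i+1))) ∣ (2 * m * P) ^ 10 ∧
      Nat.Coprime (2 * m * r + min (π r i) (π r (i+1)))
        (max (π r i) (π r (i+1)) - min (π r i) (π r (i+1))))
    (hhor : ∀ r < P, ∀ i < m,
      (2 * m + π ((r+1) % P) i - π r i) ∣ (2 * m * P) ^ 10 ∧
      Nat.Coprime (2 * m * r + π r i) (2 * m + π ((r+1) % P) i - π r i)) :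
    IsOddPrime (gridGraph m n) := by
  classical
  set L : Fin m × Fin n → ℕ := fun v => 2 * m * v.2.1 + π (v.2.1 % P) v.1.1 with hL
  have hrlt : ∀ j : ℕ, j % P < P := fun j => Nat.mod_lt _ hP
  have hlb : ∀ r < P, ∀ i < m, 1 ≤ π r i := by
    intro r hr i hi
    rcases hodd r hr i hi with ⟨c, hc⟩
    omega
  have hub' : ∀ r < P, ∀ i < m, π r i < 2 * m := by
    intro r hr i hi
    have := hub r hr i hi
    omega
  have hsplit : ∀ j : ℕ, 2 * m * j = 2 * m * (j % P + P * (j / P)) := by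
    intro j
    congr 1
    exact (Nat.mod_add_div j P).symm
  have key : ∀ (jv a d : ℕ), Odd a → d ∣ (2 * m * P) ^ 10 →
      Nat.Coprime (2 * m * (jv % P) + a) d →
      Nat.Coprime (2 * m * jv + a) (2 * m * jv + a + d) := by
    intro jv a d h1 h2 h3
    rw [hsplit jv]
    exact cop_key m P (jv % P) (jv / P) a d h1 h2 h3
  -- vertical edges
  have vert : ∀ (j i : ℕ), i + 1 < m →
      Nat.Coprime (2 * m * j + π (j % P) i) (2 * m * j + π (j % P) (i+1)) := by
    intro j i hi'
    obtain ⟨hdvd, hcop⟩ := hvert (j % P) (hrlt j) i (by omega)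
    rcases le_total (π (j % P) i) (π (j % P) (i+1)) with hle | hle
    · rw [min_eq_left hle, max_eq_right hle] at hdvd hcop
      have h := key j (π (j % P) i) _ (hodd _ (hrlt _) _ (by omega)) hdvd hcop
      have heq : 2 * m * j + π (j % P) i + (π (j % P) (i+1) - π (j % P) i)
          = 2 * m * j + π (j % P) (i+1) := by omega
      rwa [heq] at h
    · rw [min_eq_right hle, max_eq_left hle] at hdvd hcop
      have h := key j (π (j % P) (i+1)) _ (hodd _ (hrlt _) _ hi') hdvd hcop
      have heq : 2 * m * j + π (j % P) (i+1) + (π (j % P) i - π (j % P) (i+1))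
          = 2 * m * j + π (j % P) i := by omega
      rw [heq] at h
      exact h.symm
  -- horizontal edges
  have hor : ∀ (j i : ℕ), i < m →
      Nat.Coprime (2 * m * j + π (j % P) i)
        (2 * m * (j+1) + π ((j+1) % P) i) := by
    intro j i hi
    obtain ⟨hdvd, hcop⟩ := hhor (j % P) (hrlt j) i hi
    have hmod : (j + 1) % P = (j % P + 1) % P := by
      conv_lhs => rw [Nat.add_mod]
      conv_rhs => rw [Nat.add_mod]
      rw [Nat.mod_mod_of_dvd _ dvd_rfl]
    have h1 : π (j % P) i ≤ 2 * m - 1 := hub _ (hrlt _) _ hi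
    have h := key j (π (j % P) i) _ (hodd _ (hrlt _) _ hi) hdvd hcop
    have heq : 2 * m * j + π (j % P) i + (2 * m + π ((j % P + 1) % P) i - π (j % P) i)
        = 2 * m * (j+1) + π ((j+1) % P) i := by
      rw [hmod]
      have : 2 * m * (j + 1) = 2 * m * j + 2 * m := by ring
      omega
    rwa [heq] at h
  refine ⟨L, ?_, ?_, ?_⟩
  · -- injectivity
    rintro ⟨i, j⟩ ⟨i', j'⟩ h
    simp only [hL] at h
    have h1 : π (j.1 % P) i.1 < 2 * m := hub' _ (hrlt _) _ i.isLt
    have h2 : π (j'.1 % P) i'.1 < 2 * m := hub' _ (hrlt _) _ i'.isLt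
    have hj : j.1 = j'.1 := by
      have e1 : (2 * m * j.1 + π (j.1 % P) i.1) / (2 * m) = j.1 := by
        rw [Nat.mul_add_div (by omega), Nat.div_eq_of_lt h1]; omega
      have e2 : (2 * m * j'.1 + π (j'.1 % P) i'.1) / (2 * m) = j'.1 := by
        rw [Nat.mul_add_div (by omega), Nat.div_eq_of_lt h2]; omega
      rw [← e1, ← e2, h]
    have ha : π (j.1 % P) i.1 = π (j.1 % P) i'.1 := by
      rw [hj] at h ⊢
      omega
    have hi : i.1 = i'.1 := hinj _ (hrlt _) _ i.isLt _ i'.isLt ha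
    exact Prod.ext (Fin.ext hi) (Fin.ext hj)
  · -- oddness and bound
    rintro ⟨i, j⟩
    constructor
    · have he : Even (2 * m * (j.1 : ℕ)) := ⟨m * j.1, by ring⟩
      exact he.add_odd (hodd _ (hrlt _) _ i.isLt)
    · simp only [hL, Fintype.card_prod, Fintype.card_fin]
      have h1 : π (j.1 % P) i.1 ≤ 2 * m - 1 := hub _ (hrlt _) _ i.isLt
      have h2 : 2 * m * (j.1 + 1) ≤ 2 * m * n :=
        Nat.mul_le_mul_left _ (by omega)
      have h3 : 2 * m * (j.1 + 1) = 2 * m * j.1 + 2 * m := by ring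
      have h4 : 2 * (m * n) = 2 * m * n := by ring
      omega
  · -- coprimality along edges
    rintro ⟨i, j⟩ ⟨i', j'⟩ hadj
    simp only [gridGraph, SimpleGraph.boxProd_adj, SimpleGraph.pathGraph_adj] at hadj
    simp only [hL]
    rcases hadj with ⟨hii, hjj⟩ | ⟨hjj, hii⟩
    · -- vertical edge: same column
      have hj : j.1 = j'.1 := by rw [hjj]
      rcases hii with h | h
      · rw [← hj, ← h]
        exact vert j.1 i.1 (by omega)
      · rw [← hj, ← h]
        exact (vert j.1 i'.1 (by omega)).symm
    · -- horizontal edge: same row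
      have hi : i.1 = i'.1 := by rw [hii]
      rcases hjj with h | h
      · rw [hi, ← h]
        exact hor j.1 i'.1 i'.isLt
      · rw [← hi, ← h]
        exact (hor j'.1 i.1 i.isLt).symm
  done

/-- The pattern for `m = 3` (period 2). -/
def pat3 : ℕ → ℕ → ℕ := fun r i => (([[1,3,5],[1,5,3]].getD r []).getD i 0)

/-- The pattern for `m = 5` (period 6). -/
def pat5 : ℕ → ℕ → ℕ := fun r i =>
  (([[1,3,5,7,9],[1,3,7,5,9],[1,5,7,3,9],
     [1,3,5,9,7],[1,3,7,9,5],[1,5,7,9,3]].getD r []).getD i 0)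

/-- The pattern for `m = 6` (period 2). -/
def pat6 : ℕ → ℕ → ℕ := fun r i => (([[1,3,5,9,7,11],[1,7,9,5,3,11]].getD r []).getD i 0)

/-- Grid graphs `P_m × P_n` are odd prime for `m = 3`, `m = 5`, `m = 6`, and
`m = 2^k` with `k ≥ 2`, and for any `n ≥ 1`. -/
theorem gridGraph_oddPrime (m n : ℕ) (hn : 1 ≤ n)
    (hm : m = 3 ∨ m = 5 ∨ m = 6 ∨ ∃ k, 2 ≤ k ∧ m = 2 ^ k) :
    IsOddPrime (gridGraph m n) := by
  rcases hm with rfl | rfl | rfl | ⟨k, hk, rfl⟩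
  · exact isOddPrime_grid_of_pattern 3 n 2 (by norm_num) (by norm_num) pat3
      (by decide) (by decide) (by decide) (by decide) (by decide)
  · exact isOddPrime_grid_of_pattern 5 n 6 (by norm_num) (by norm_num) pat5
      (by decide) (by decide) (by decide) (by decide) (by decide)
  · exact isOddPrime_grid_of_pattern 6 n 2 (by norm_num) (by norm_num) pat6
      (by decide) (by decide) (by decide) (by decide) (by decide)
  · -- m = 2^k
    have hm : 0 < 2 ^ k := pow_pos (by norm_num) k
    apply isOddPrime_grid_of_pattern (2^k) n 1 hm one_pos (fun _ i => 2 * i + 1)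
    · intro r _ i _; exact ⟨i, by ring⟩
    · intro r _ i hi; omega
    · intro r _ i _ i' _ h; omega
    · intro r hr i hi
      have hr0 : r = 0 := by omega
      subst hr0
      show (max (2*i+1) (2*(i+1)+1) - min (2*i+1) (2*(i+1)+1)) ∣ (2 * 2^k * 1) ^ 10 ∧
        Nat.Coprime (2 * 2^k * 0 + min (2*i+1) (2*(i+1)+1))
          (max (2*i+1) (2*(i+1)+1) - min (2*i+1) (2*(i+1)+1))
      have hmin : min (2*i+1) (2*(i+1)+1) = 2*i+1 := by omega
      have hmax : max (2*i+1) (2*(i+1)+1) = 2*(i+1)+1 := by omega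
      rw [hmin, hmax]
      have hd : 2*(i+1)+1 - (2*i+1) = 2 := by omega
      rw [hd]
      constructor
      · exact dvd_trans ⟨2^k * 1, by ring⟩ (dvd_pow_self _ (by norm_num))
      · have : 2 * 2^k * 0 + (2*i+1) = 2*i+1 := by ring
        rw [this]
        exact Nat.coprime_two_right.mpr ⟨i, by ring⟩
    · intro r hr i hi
      have hr0 : r = 0 := by omega
      subst hr0
      show (2 * 2^k + (2*i+1) - (2*i+1)) ∣ (2 * 2^k * 1) ^ 10 ∧
        Nat.Coprime (2 * 2^k * 0 + (2*i+1)) (2 * 2^k + (2*i+1) - (2*i+1))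
      have hd : 2 * 2^k + (2*i+1) - (2*i+1) = 2 * 2^k := by omega
      have ha : 2 * 2^k * 0 + (2*i+1) = 2*i+1 := by ring
      rw [hd, ha]
      constructor
      · exact dvd_trans ⟨1, by ring⟩ (dvd_pow_self _ (by norm_num))
      · have h2 : 2 * 2^k = 2^(k+1) := by rw [pow_succ]; ring
        rw [h2]
        exact Nat.Coprime.pow_right _ (Nat.coprime_two_right.mpr ⟨i, by ring⟩)
end

section
/- Every perfect binary tree is odd prime. -/
/-- The perfect binary tree with `n` levels: the vertex `⟨i, j⟩` is the `j`-th vertex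
on level `i` (with `0 ≤ i < n` and `0 ≤ j < 2^i`), and every vertex `⟨i, j⟩` with
`i < n - 1` has exactly the two children `⟨i+1, 2j⟩` and `⟨i+1, 2j+1⟩`. -/
def perfectBinaryTree (n : ℕ) : SimpleGraph (Σ i : Fin n, Fin (2 ^ i.val)) :=
  SimpleGraph.fromRel (fun a b =>
    b.1.val = a.1.val + 1 ∧ (b.2.val = 2 * a.2.val ∨ b.2.val = 2 * a.2.val + 1))

section aux

variable {n : ℕ}

private def fidx (v : Σ i : Fin n, Fin (2 ^ i.val)) : ℕ := 2 ^ v.1.val + v.2.val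

private lemma fidx_lt (v : Σ i : Fin n, Fin (2 ^ i.val)) : fidx v < 2 ^ (v.1.val + 1) := by
  have := v.2.isLt
  simp only [fidx, pow_succ]
  omega

private lemma fidx_le (v : Σ i : Fin n, Fin (2 ^ i.val)) : fidx v ≤ 2 ^ n - 1 := by
  have h1 := fidx_lt v
  have h2 : 2 ^ (v.1.val + 1) ≤ 2 ^ n := Nat.pow_le_pow_right (by norm_num) v.1.isLt
  omega

private lemma fidx_inj : Function.Injective (fidx (n := n)) := by
  intro a b h
  have ha1 : 2 ^ a.1.val ≤ fidx a := Nat.le_add_right _ _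
  have hb1 : 2 ^ b.1.val ≤ fidx b := Nat.le_add_right _ _
  have ha2 := fidx_lt a
  have hb2 := fidx_lt b
  have hi : a.1.val = b.1.val := by
    by_contra hne
    rcases Nat.lt_or_ge a.1.val b.1.val with hlt | hge
    · have : 2 ^ (a.1.val + 1) ≤ 2 ^ b.1.val := Nat.pow_le_pow_right (by norm_num) hlt
      omega
    · have hlt : b.1.val < a.1.val := by omega
      have : 2 ^ (b.1.val + 1) ≤ 2 ^ a.1.val := Nat.pow_le_pow_right (by norm_num) hlt
      omega
  have hj : a.2.val = b.2.val := by
    simp only [fidx, hi] at h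
    omega
  obtain ⟨⟨i, hi'⟩, ⟨j, hj'⟩⟩ := a
  obtain ⟨⟨i', hi''⟩, ⟨j', hj''⟩⟩ := b
  simp only at hi hj
  subst hi
  simp only [Sigma.mk.inj_iff, Fin.mk.injEq, heq_eq_eq, true_and]
  exact hj

private lemma cop1 (x : ℕ) : Nat.Coprime (2 * x + 1) (2 * (2 * x) + 1) := by
  have h1 := Nat.gcd_dvd_left (2 * x + 1) (2 * (2 * x) + 1)
  have h2 := Nat.gcd_dvd_right (2 * x + 1) (2 * (2 * x) + 1)
  have h3 : Nat.gcd (2 * x + 1) (2 * (2 * x) + 1) ∣ 2 * (2 * x + 1) - (2 * (2 * x) + 1) :=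
    Nat.dvd_sub (h1.mul_left 2) h2
  have h4 : 2 * (2 * x + 1) - (2 * (2 * x) + 1) = 1 := by omega
  rw [h4] at h3
  exact Nat.dvd_one.mp h3

private lemma cop2 (x : ℕ) : Nat.Coprime (2 * x + 1) (2 * (2 * x + 1) + 1) := by
  have h1 := Nat.gcd_dvd_left (2 * x + 1) (2 * (2 * x + 1) + 1)
  have h2 := Nat.gcd_dvd_right (2 * x + 1) (2 * (2 * x + 1) + 1)
  have h3 : Nat.gcd (2 * x + 1) (2 * (2 * x + 1) + 1) ∣ (2 * (2 * x + 1) + 1) - 2 * (2 * x + 1) :=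
    Nat.dvd_sub h2 (h1.mul_left 2)
  have h4 : (2 * (2 * x + 1) + 1) - 2 * (2 * x + 1) = 1 := by omega
  rw [h4] at h3
  exact Nat.dvd_one.mp h3

private lemma fidx_pos (v : Σ i : Fin n, Fin (2 ^ i.val)) : 1 ≤ fidx v :=
  le_trans Nat.one_le_two_pow (Nat.le_add_right _ _)

end aux

/-- Every perfect binary tree is odd prime. -/
theorem perfectBinaryTree_oddPrime (n : ℕ) (hn : 1 ≤ n) :
    IsOddPrime (perfectBinaryTree n) := by
  have hcard : Fintype.card (Σ i : Fin n, Fin (2 ^ i.val)) = 2 ^ n - 1 := by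
    rw [Fintype.card_sigma]
    simp only [Fintype.card_fin]
    rw [Fin.sum_univ_eq_sum_range (fun i => 2 ^ i), Nat.geomSum_eq le_rfl]
    simp
  refine ⟨fun v => if fidx v = 2 ^ n - 1 then 1 else 2 * fidx v + 1, ?_, ?_, ?_⟩
  · intro a b h
    dsimp only at h
    by_cases ha : fidx a = 2 ^ n - 1 <;> by_cases hb : fidx b = 2 ^ n - 1
    · exact fidx_inj (ha.trans hb.symm)
    · rw [if_pos ha, if_neg hb] at h
      have := fidx_pos b; omega
    · rw [if_neg ha, if_pos hb] at h
      have := fidx_pos a; omega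
    · rw [if_neg ha, if_neg hb] at h
      exact fidx_inj (by omega)
  · intro v
    rw [hcard]
    dsimp only
    by_cases hv : fidx v = 2 ^ n - 1
    · rw [if_pos hv]
      have h2 : 2 ^ 1 ≤ 2 ^ n := Nat.pow_le_pow_right (by norm_num) hn
      exact ⟨odd_one, by omega⟩
    · rw [if_neg hv]
      have := fidx_le v
      exact ⟨⟨fidx v, by ring⟩, by omega⟩
  · intro u v huv
    rw [perfectBinaryTree, SimpleGraph.fromRel_adj] at huv
    obtain ⟨hne, hrel⟩ := huv
    -- wlog: handle both orientations
    have key : ∀ a b : (Σ i : Fin n, Fin (2 ^ i.val)),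
        (b.1.val = a.1.val + 1 ∧ (b.2.val = 2 * a.2.val ∨ b.2.val = 2 * a.2.val + 1)) →
        Nat.Coprime (if fidx a = 2 ^ n - 1 then 1 else 2 * fidx a + 1)
          (if fidx b = 2 ^ n - 1 then 1 else 2 * fidx b + 1) := by
      intro a b ⟨h1, h2⟩
      have hanot : fidx a ≠ 2 ^ n - 1 := by
        have h3 := fidx_lt a
        have h4 : 2 ^ (a.1.val + 1) ≤ 2 ^ (n - 1) := by
          apply Nat.pow_le_pow_right (by norm_num)
          have := b.1.isLt
          omega
        have h5 : 2 ^ (n - 1) < 2 ^ n := Nat.pow_lt_pow_right (by norm_num) (by omega)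
        omega
      rw [if_neg hanot]
      by_cases hb : fidx b = 2 ^ n - 1
      · rw [if_pos hb]; exact Nat.coprime_one_right _
      · rw [if_neg hb]
        have hfb : fidx b = 2 * fidx a ∨ fidx b = 2 * fidx a + 1 := by
          simp only [fidx, h1, pow_succ]
          omega
        rcases hfb with h | h <;> rw [h]
        · exact cop1 (fidx a)
        · exact cop2 (fidx a)
    rcases hrel with h | h
    · exact key u v h
    · exact (key v u h).symm
end

section
/- Given a sequence of n+1 consecutive odd integers {x_i} = {m, m+2, ..., m+2n} and a specified entry x_j, there exists a reordering of the sequence into x_{i_1}, x_{i_2}, ..., x_{i_n}, x_j (ending with the specified entry x_j) such that the absolute difference of every pair of consecutive entries in the reordered sequence is a power of 2 with exponent at least 1; that is, |x_{i_k} − x_{i_{k−1}}| = 2^s for each k = 2, ..., n and |x_j − x_{i_n}| = 2^t for some integers s, t ≥ 1. -/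
/-- Given the sequence of `n + 1` consecutive odd integers `m, m + 2, ..., m + 2n`
(the `i`-th entry being `m + 2i`) and a specified entry (the `j`-th one), there is a
reordering (a permutation `σ` of the positions) ending with the specified entry such
that the absolute difference of every pair of consecutive entries of the reordered
sequence is a power of 2 with exponent at least 1. -/
theorem reordering_lemma (m : ℤ) (hm : Odd m) (n : ℕ) (hn : 1 ≤ n) (j : Fin (n + 1)) :
    ∃ σ : Equiv.Perm (Fin (n + 1)), σ (Fin.last n) = j ∧
      ∀ i : Fin n, ∃ s : ℕ, 1 ≤ s ∧
        |(m + 2 * ((σ i.succ).val : ℤ)) - (m + 2 * ((σ i.castSucc).val : ℤ))| = 2 ^ s := by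
  have hj : j.val ≤ n := Nat.lt_succ_iff.mp j.isLt
  set r : ℕ := n - j.val with hr
  set F : ℕ → ℕ := fun k =>
    if k ≤ r then j.val + (if 2 * k ≤ r then 2 * k else 2 * (r - k) + 1) else n - k with hF
  have hFle : ∀ k, k ≤ n → F k ≤ n := by
    intro k hk; simp only [hF]; split_ifs <;> omega
  have hF0 : F 0 = j.val := by simp only [hF]; split_ifs <;> omega
  have hstep : ∀ k, k + 1 ≤ n →
      F (k + 1) + 1 = F k ∨ F k + 1 = F (k + 1) ∨ F (k + 1) + 2 = F k ∨ F k + 2 = F (k + 1) := by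
    intro k hk; simp only [hF]; split_ifs <;> omega
  have hinj : ∀ k k', k ≤ n → k' ≤ n → F k = F k' → k = k' := by
    intro k k' hk hk' h; simp only [hF] at h; split_ifs at h <;> omega
  set g : Fin (n + 1) → Fin (n + 1) := fun i =>
    ⟨F i.val, Nat.lt_succ_of_le (hFle i.val (Nat.lt_succ_iff.mp i.isLt))⟩ with hg
  have hginj : Function.Injective g := by
    intro a b hab
    apply Fin.ext
    exact hinj a.val b.val (Nat.lt_succ_iff.mp a.isLt) (Nat.lt_succ_iff.mp b.isLt)
      (congrArg Fin.val hab)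
  have hgbij : Function.Bijective g := (Finite.injective_iff_bijective).mp hginj
  refine ⟨Fin.revPerm.trans (Equiv.ofBijective g hgbij), ?_, ?_⟩
  · have : (Fin.last n).rev = 0 := by
      apply Fin.ext; simp [Fin.val_rev]
    simp only [Equiv.trans_apply, Fin.revPerm_apply, this, Equiv.ofBijective_apply]
    apply Fin.ext
    simpa [hg] using hF0
  · intro i
    have hi : i.val < n := i.isLt
    set k : ℕ := n - 1 - i.val with hk
    have hv1 : ((Fin.revPerm.trans (Equiv.ofBijective g hgbij)) i.succ).val = F k := by
      simp only [Equiv.trans_apply, Fin.revPerm_apply, Equiv.ofBijective_apply, hg]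
      congr 1
      simp [Fin.val_rev]
      omega
    have hv2 : ((Fin.revPerm.trans (Equiv.ofBijective g hgbij)) i.castSucc).val = F (k + 1) := by
      simp only [Equiv.trans_apply, Fin.revPerm_apply, Equiv.ofBijective_apply, hg]
      congr 1
      simp [Fin.val_rev]
      omega
    rw [hv1, hv2]
    rcases hstep k (by omega) with h | h | h | h
    · refine ⟨1, le_refl 1, ?_⟩
      rw [show (m + 2 * (F k : ℤ)) - (m + 2 * (F (k + 1) : ℤ)) = 2 by omega]
      norm_num
    · refine ⟨1, le_refl 1, ?_⟩
      rw [show (m + 2 * (F k : ℤ)) - (m + 2 * (F (k + 1) : ℤ)) = -2 by omega]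
      norm_num
    · refine ⟨2, by norm_num, ?_⟩
      rw [show (m + 2 * (F k : ℤ)) - (m + 2 * (F (k + 1) : ℤ)) = 4 by omega]
      norm_num
    · refine ⟨2, by norm_num, ?_⟩
      rw [show (m + 2 * (F k : ℤ)) - (m + 2 * (F (k + 1) : ℤ)) = -4 by omega]
      norm_num
end
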